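/- arXiv:1708.09774 — 3 statements merged into one kernel-verified Lean document; each statement's English description precedes it below -/
import Mathlib

section
/- Every non-trivial weak tree T (a tree with at least two vertices and no vertex adjacent to two or more leaves) has a pair of disjoint dominating sets with a perfect matching between them; i.e., T has a swap set. -/
/-!
Induct on finite forests without isolated vertices and strong stems. Let `l` be a vertex at
maximal distance from some vertex and `s` its neighbour; then `l` is a leaf and every neighbour
of `s` other than its parent `t` is a leaf, so by weakness `s` has no neighbours besides `l`
and `t`. If deleting `l, s` leaves such a forest, a swap pair of the rest extends by
`s ∈ D`, `l ∈ D'`. Otherwise `t` has become a second leaf of a vertex `w` that already has a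
leaf `x`; then delete `t` as well. As `x` is a leaf, `w` lies in one of the two sets, and
adding `l, s` in the right order dominates `t` from both sides.
-/

open SimpleGraph

variable {V : Type*}

/-- `D` is a dominating set of `G`. -/
def IsDomSet (G : SimpleGraph V) (D : Set V) : Prop :=
  ∀ v, v ∉ D → ∃ u ∈ D, G.Adj u v

/-- `D, D'` are disjoint dominating sets with a perfect matching between them
(each vertex of `D` matched to a distinct adjacent vertex of `D'`). -/
def IsSwapPair (G : SimpleGraph V) (D D' : Set V) : Prop :=
  IsDomSet G D ∧ IsDomSet G D' ∧ Disjoint D D' ∧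
    ∃ f : D ≃ D', ∀ x : D, G.Adj x (f x)

/-- `DD_m(G)`: minimum cardinality of a swap set (`⊤` if none exists). -/
noncomputable def DDm (G : SimpleGraph V) : ℕ∞ :=
  sInf {n : ℕ∞ | ∃ D D' : Set V, IsSwapPair G D D' ∧ (D.ncard : ℕ∞) = n}

/-- domination number -/
noncomputable def domNum (G : SimpleGraph V) : ℕ :=
  sInf {n : ℕ | ∃ D : Set V, IsDomSet G D ∧ D.ncard = n}

/-- independence number -/
noncomputable def indepNum (G : SimpleGraph V) : ℕ :=
  sSup {n : ℕ | ∃ I : Set V, (∀ a ∈ I, ∀ b ∈ I, ¬ G.Adj a b) ∧ I.ncard = n}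

/-- a leaf: a vertex of degree one -/
def IsLeaf (G : SimpleGraph V) (v : V) : Prop := (G.neighborSet v).ncard = 1

/-- a strong stem: a vertex adjacent to at least two leaves -/
def IsStrongStem (G : SimpleGraph V) (v : V) : Prop :=
  ∃ l₁ l₂, l₁ ≠ l₂ ∧ G.Adj v l₁ ∧ G.Adj v l₂ ∧ IsLeaf G l₁ ∧ IsLeaf G l₂

/-- a weak graph: no strong stems -/
def IsWeakGraph (G : SimpleGraph V) : Prop := ∀ v, ¬ IsStrongStem G v

/-- the set `S` induces a star (with some center `c`). -/
def IsStarSet (G : SimpleGraph V) (S : Set V) : Prop :=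
  ∃ c ∈ S, (∀ x ∈ S, x ≠ c → G.Adj c x) ∧
    ∀ x ∈ S, ∀ y ∈ S, x ≠ c → y ≠ c → ¬ G.Adj x y

/-- two parts are adjacent -/
def PartsAdj (G : SimpleGraph V) (A B : Set V) : Prop :=
  ∃ a ∈ A, ∃ b ∈ B, G.Adj a b

/-- A simple star partitioning of (the vertices of) `G`. -/
structure IsSSP (G : SimpleGraph V) (P : Finset (Set V)) : Prop where
  cover : ∀ v : V, ∃! S, S ∈ P ∧ v ∈ S
  star : ∀ S ∈ P, IsStarSet G S
  weakStem : ∀ v l, G.Adj v l → IsLeaf G l →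
    (∀ l', G.Adj v l' → IsLeaf G l' → l' = l) → ({v, l} : Set V) ∈ P
  k1 : ∀ S ∈ P, S.ncard = 1 → ∃ A ∈ P, ∃ B ∈ P, A ≠ B ∧
    A.ncard ≠ 1 ∧ B.ncard ≠ 1 ∧ PartsAdj G S A ∧ PartsAdj G S B

/-- weight of a star partitioning: a part of order `k` has weight `k-1`. -/
noncomputable def SSPweight (P : Finset (Set V)) : ℕ := ∑ S ∈ P, (S.ncard - 1)

/-- `S(G)`: minimum weight of a simple star partitioning. -/
noncomputable def starS (G : SimpleGraph V) : ℕ :=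
  sInf {w : ℕ | ∃ P : Finset (Set V), IsSSP G P ∧ SSPweight P = w}

/-- `W` is the vertex set of a weak reduction of `G`: all but one leaf
neighbor of each strong stem are removed. -/
def IsWeakReduction (G : SimpleGraph V) (W : Set V) : Prop :=
  (∀ v, v ∉ W → IsLeaf G v ∧ ∃ s, G.Adj s v ∧ IsStrongStem G s) ∧
  (∀ s, IsStrongStem G s → ∃! l, l ∈ W ∧ G.Adj s l ∧ IsLeaf G l)

section

variable {G : SimpleGraph V}

lemma IsLeaf.neighborSet_eq {v w : V} (h : IsLeaf G v) (hw : G.Adj v w) :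
    G.neighborSet v = {w} := by
  obtain ⟨c, hc⟩ := Set.ncard_eq_one.mp h
  rwa [(Set.eq_of_mem_singleton (hc ▸ hw : w ∈ ({c} : Set V)))]

lemma IsLeaf.eq_of_adj {u v w : V} (h : IsLeaf G v) (hu : G.Adj v u) (hw : G.Adj v w) : u = w :=
  (h.neighborSet_eq hw ▸ hu : u ∈ ({w} : Set V))

lemma isLeaf_of_neighborSet_eq {v w : V} (h : G.neighborSet v = {w}) : IsLeaf G v := by
  simp [IsLeaf, h]

lemma IsWeakGraph.eq_of_isLeaf (hG : IsWeakGraph G) {u v w : V} (hu : G.Adj v u)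
    (hw : G.Adj v w) (hu' : IsLeaf G u) (hw' : IsLeaf G w) : u = w := by
  by_contra hne
  exact hG v ⟨u, w, hne, hu, hw, hu', hw'⟩

lemma isLeaf_induce_iff {S : Set V} {v : S} (h : G.neighborSet v ⊆ S) :
    IsLeaf (G.induce S) v ↔ IsLeaf G v := by
  have : (G.induce S).neighborSet v = Subtype.val ⁻¹' G.neighborSet v := rfl
  rw [IsLeaf, IsLeaf, this, Set.ncard_preimage_of_injective_subset_range Subtype.val_injective
    (by simpa using h)]

lemma SimpleGraph.IsAcyclic.eq_penultimate_of_dist_add_one (hG : G.IsAcyclic) {u v y : V}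
    (p : G.Walk u v) (hp : p.length = G.dist u v) (hy : G.Adj v y)
    (hdist : G.dist u y + 1 = G.dist u v) : y = p.penultimate := by
  classical
  have hpath := p.isPath_of_length_eq_dist hp
  obtain ⟨q, hq, hql⟩ := (p.reachable.trans hy.reachable).exists_path_of_dist
  refine hG.eq_penultimate_of_adj_end hpath hy
    (hG.mem_support_of_ne_mem_support_of_adj_of_isPath hpath hq hy fun hv => ?_)
  have := G.dist_le (q.takeUntil v hv)
  have := q.length_takeUntil_le_length hv
  omega

lemma SimpleGraph.IsAcyclic.neighborSet_eq_of_forall_dist_le (hG : G.IsAcyclic) {u l : V}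
    (hl : ∀ v, G.dist u v ≤ G.dist u l) (p : G.Walk u l) (hp : p.length = G.dist u l)
    (hlu : l ≠ u) : G.neighborSet l = {p.penultimate} := by
  ext y
  refine ⟨fun hy => ?_, fun hy => (hy ▸ p.adj_penultimate (p.not_nil_of_ne hlu.symm)).symm⟩
  rcases hG.dist_eq_dist_add_one_of_adj_of_reachable u hy ⟨p⟩ with h | h
  · exact hG.eq_penultimate_of_dist_add_one p hp hy h.symm
  · have := hl y
    omega

lemma SimpleGraph.IsAcyclic.exists_leaf_stem [Finite V] (hG : G.IsAcyclic) {u v : V}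
    (huv : G.Adj u v) :
    ∃ l s t, G.Adj l s ∧ IsLeaf G l ∧ ∀ y, G.Adj s y → y ≠ t → IsLeaf G y := by
  have : Nonempty V := ⟨u⟩
  obtain ⟨l, hl⟩ := Finite.exists_max (G.dist u)
  have hlu : G.dist u l ≠ 0 := by
    have := hl v
    rw [dist_eq_one_iff_adj.mpr huv] at this
    omega
  have hreach : G.Reachable u l := Reachable.of_dist_ne_zero hlu
  have hleaf : ∀ y, G.dist u y = G.dist u l → ∃ z, G.neighborSet y = {z} := by
    intro y hy
    obtain ⟨r, hr⟩ := (Reachable.of_dist_ne_zero (hy ▸ hlu)).exists_walk_length_eq_dist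
    exact ⟨_, hG.neighborSet_eq_of_forall_dist_le (hy ▸ hl) r hr
      fun h => hlu (by rw [← hy, h, dist_self])⟩
  obtain ⟨s, hls⟩ := hleaf l rfl
  have hsl : G.Adj s l := (show s ∈ G.neighborSet l by simp [hls]).symm
  have hdls : G.dist u l = G.dist u s + 1 := by
    have := hl s
    have := hG.dist_eq_dist_add_one_of_adj_of_reachable u hsl.symm hreach
    omega
  obtain ⟨q, hq⟩ := (hreach.trans hsl.symm.reachable).exists_walk_length_eq_dist
  refine ⟨l, s, q.penultimate, hsl.symm, isLeaf_of_neighborSet_eq hls, fun y hsy hyt => ?_⟩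
  rcases hG.dist_eq_dist_add_one_of_adj_of_reachable u hsy ⟨q⟩ with h | h
  · exact absurd (hG.eq_penultimate_of_dist_add_one q hq hsy h.symm) hyt
  · obtain ⟨z, hz⟩ := hleaf y (by omega)
    exact isLeaf_of_neighborSet_eq hz

lemma IsSwapPair.mem_or_mem_of_isLeaf {D D' : Set V} (h : IsSwapPair G D D') {x w : V}
    (hx : IsLeaf G x) (hxw : G.Adj x w) : w ∈ D ∨ w ∈ D' := by
  obtain ⟨hD, -, -, f, hf⟩ := h
  by_cases hxD : x ∈ D
  · exact .inr (hx.eq_of_adj (hf ⟨x, hxD⟩) hxw ▸ (f ⟨x, hxD⟩).2)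
  · obtain ⟨u, hu, hux⟩ := hD x hxD
    exact .inl (hx.eq_of_adj hux.symm hxw ▸ hu)

lemma exists_equiv_insert {D D' : Set V} (e : D ≃ D') (he : ∀ y : D, G.Adj y (e y)) {a b : V}
    (ha : a ∉ D) (hb : b ∉ D') (hab : G.Adj a b) :
    ∃ g : (insert a D : Set V) ≃ (insert b D' : Set V),
      ∀ y : (insert a D : Set V), G.Adj y (g y) := by
  classical
  refine ⟨(Equiv.Set.insert ha).trans
    ((Equiv.sumCongr e (Equiv.refl _)).trans (Equiv.Set.insert hb).symm), ?_⟩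
  rintro ⟨x, rfl | hx⟩
  · simpa using hab
  · simpa [Equiv.Set.insert_apply_right ha ⟨x, hx⟩] using he ⟨x, hx⟩

lemma exists_equiv_image_val {S : Set V} {E E' : Set S} (f : E ≃ E')
    (hf : ∀ y : E, (G.induce S).Adj y (f y)) :
    ∃ e : (Subtype.val '' E) ≃ (Subtype.val '' E'),
      ∀ y : (Subtype.val '' E), G.Adj y (e y) := by
  refine ⟨(Equiv.Set.image _ E Subtype.val_injective).symm.trans
    (f.trans (Equiv.Set.image _ E' Subtype.val_injective)), ?_⟩
  rintro ⟨_, y, hy, rfl⟩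
  have : (Equiv.Set.image _ E Subtype.val_injective).symm ⟨y, y, hy, rfl⟩ = ⟨y, hy⟩ :=
    (Equiv.Set.image _ E Subtype.val_injective).symm_apply_eq.mpr rfl
  simpa [this] using hf ⟨y, hy⟩

lemma IsDomSet.of_induce {S : Set V} {E : Set S} {D : Set V} (hE : IsDomSet (G.induce S) E)
    (hED : Subtype.val '' E ⊆ D) (hout : ∀ v ∉ S, v ∉ D → ∃ u ∈ D, G.Adj u v) :
    IsDomSet G D := by
  intro v hv
  by_cases hvS : v ∈ S
  · obtain ⟨u, hu, huv⟩ := hE ⟨v, hvS⟩ fun h => hv (hED ⟨_, h, rfl⟩)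
    exact ⟨u, hED ⟨u, hu, rfl⟩, huv⟩
  · exact hout v hvS hv

lemma IsSwapPair.lift {S : Set V} {E E' : Set S} (h : IsSwapPair (G.induce S) E E') {a b : V}
    (ha : a ∉ S) (hb : b ∉ S) (hab : G.Adj a b)
    (hout : ∀ v ∉ S, v ≠ a → v ≠ b →
      (∃ u ∈ insert a (Subtype.val '' E), G.Adj u v) ∧
      (∃ u ∈ insert b (Subtype.val '' E'), G.Adj u v)) :
    IsSwapPair G (insert a (Subtype.val '' E)) (insert b (Subtype.val '' E')) := by
  obtain ⟨hE, hE', hdisj, f, hf⟩ := h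
  have hnotMem : ∀ {c} (F : Set S), c ∉ S → c ∉ Subtype.val '' F :=
    fun _ hc ⟨y, _, hy⟩ => hc (hy ▸ y.2)
  refine ⟨hE.of_induce (Set.subset_insert _ _) fun v hvS hv => ?_,
    hE'.of_induce (Set.subset_insert _ _) fun v hvS hv => ?_, ?_, ?_⟩
  · obtain rfl | hvb := eq_or_ne v b
    · exact ⟨a, Set.mem_insert _ _, hab⟩
    · exact (hout v hvS (fun h => hv (h ▸ Set.mem_insert _ _)) hvb).1
  · obtain rfl | hva := eq_or_ne v a
    · exact ⟨b, Set.mem_insert _ _, hab.symm⟩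
    · exact (hout v hvS hva fun h => hv (h ▸ Set.mem_insert _ _)).2
  · simp only [Set.disjoint_insert_left, Set.disjoint_insert_right, Set.mem_insert_iff, not_or]
    exact ⟨⟨hab.ne', hnotMem E hb⟩, hnotMem E' ha,
      (Set.disjoint_image_iff Subtype.val_injective).mpr hdisj⟩
  · obtain ⟨e, he⟩ := exists_equiv_image_val f hf
    exact exists_equiv_insert e he (hnotMem E ha) (hnotMem E' hb) hab

lemma IsSwapPair.exists_of_induce_compl_pair {a b : V} (hab : G.Adj a b)
    {E E' : Set ({a, b}ᶜ : Set V)} (h : IsSwapPair (G.induce {a, b}ᶜ) E E') :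
    ∃ D D', IsSwapPair G D D' :=
  ⟨_, _, h.lift (by simp) (by simp) hab fun v hv hva hvb => absurd hv (by simp [hva, hvb])⟩

/-- Whichever side `w` lies on, `t` is dominated by `w` on one side and by `s` on the other. -/
lemma IsSwapPair.exists_of_induce_compl_triple {l s t w : V} (hls : G.Adj l s)
    (hst : G.Adj s t) (htw : G.Adj t w) (hw : w ∈ ({l, s, t}ᶜ : Set V))
    {E E' : Set ({l, s, t}ᶜ : Set V)} (h : IsSwapPair (G.induce {l, s, t}ᶜ) E E')
    (hwE : ⟨w, hw⟩ ∈ E ∨ ⟨w, hw⟩ ∈ E') : ∃ D D', IsSwapPair G D D' := by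
  have ht : ∀ v ∉ ({l, s, t}ᶜ : Set V), v ≠ l → v ≠ s → v = t := by
    intro v hv hvl hvs
    simpa [hvl, hvs] using hv
  rcases hwE with hwE | hwE
  · refine ⟨_, _, h.lift (by simp) (by simp) hls fun v hv hvl hvs => ?_⟩
    obtain rfl := ht v hv hvl hvs
    exact ⟨⟨w, Set.mem_insert_of_mem _ ⟨_, hwE, rfl⟩, htw.symm⟩, ⟨s, Set.mem_insert _ _, hst⟩⟩
  · refine ⟨_, _, h.lift (by simp) (by simp) hls.symm fun v hv hvs hvl => ?_⟩
    obtain rfl := ht v hv hvl hvs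
    exact ⟨⟨s, Set.mem_insert _ _, hst⟩, ⟨w, Set.mem_insert_of_mem _ ⟨_, hwE, rfl⟩, htw.symm⟩⟩

lemma exists_adj_induce {S : Set V} {b : V} (hG : ∀ v, ∃ w, G.Adj v w)
    (hS : ∀ v ∈ S, v ≠ b → G.neighborSet v ⊆ S) (hb : b ∈ S → ∃ y ∈ S, G.Adj b y) (v : S) :
    ∃ w, (G.induce S).Adj v w := by
  by_cases hvb : (v : V) = b
  · obtain ⟨y, hyS, hy⟩ := hb (hvb ▸ v.2)
    exact ⟨⟨y, hyS⟩, show G.Adj v y by rwa [hvb]⟩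
  · obtain ⟨y, hy⟩ := hG v
    exact ⟨⟨y, hS v v.2 hvb hy⟩, hy⟩

/-- If only `b` loses neighbours, a strong stem of `G.induce S` must have `b` as one of its two
leaves. -/
lemma IsWeakGraph.exists_of_not_isWeakGraph_induce (hG : IsWeakGraph G) {S : Set V} {b : V}
    (hS : ∀ v ∈ S, v ≠ b → G.neighborSet v ⊆ S) (h : ¬ IsWeakGraph (G.induce S)) :
    ∃ w x, b ∈ S ∧ w ∈ S ∧ x ∈ S ∧ x ≠ b ∧ G.Adj w b ∧ G.Adj w x ∧ IsLeaf G x ∧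
      (∀ y ∈ S, G.Adj b y → y = w) ∧ ¬ G.neighborSet b ⊆ S := by
  simp only [IsWeakGraph, not_forall, not_not] at h
  obtain ⟨z, m₁, m₂, hne, hz₁, hz₂, hm₁, hm₂⟩ := h
  have hleaf : ∀ m : S, IsLeaf (G.induce S) m → (m : V) ≠ b → IsLeaf G m :=
    fun m hm hmb => (isLeaf_induce_iff (hS m m.2 hmb)).mp hm
  wlog h₁ : (m₁ : V) = b generalizing m₁ m₂
  · by_cases h₂ : (m₂ : V) = b
    · exact this m₂ m₁ hne.symm hz₂ hz₁ hm₂ hm₁ h₂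
    · exact absurd (Subtype.ext (hG.eq_of_isLeaf hz₁ hz₂ (hleaf _ hm₁ h₁) (hleaf _ hm₂ h₂))) hne
  obtain rfl := h₁
  have h₂ : (m₂ : V) ≠ m₁ := fun h => hne (Subtype.ext h).symm
  refine ⟨z, m₂, m₁.2, z.2, m₂.2, h₂, hz₁, hz₂, hleaf m₂ hm₂ h₂,
    fun y hy hy₁ => congrArg Subtype.val (hm₁.eq_of_adj (u := ⟨y, hy⟩) (by exact hy₁) hz₁.symm),
    fun hsub => hne (Subtype.ext ?_)⟩
  exact hG.eq_of_isLeaf hz₁ hz₂ ((isLeaf_induce_iff hsub).mp hm₁) (hleaf m₂ hm₂ h₂)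

end

/-- Forests rather than trees, so that deleting vertices needs no connectivity argument. -/
structure IsWeakForest (G : SimpleGraph V) : Prop where
  isAcyclic : G.IsAcyclic
  exists_adj : ∀ v, ∃ w, G.Adj v w
  isWeakGraph : IsWeakGraph G

section

variable {G : SimpleGraph V} {l s t : V}

lemma IsWeakForest.induce (hG : IsWeakForest G) {S : Set V} {b : V}
    (hS : ∀ v ∈ S, v ≠ b → G.neighborSet v ⊆ S) (hb : b ∈ S → ∃ y ∈ S, G.Adj b y)
    (hW : IsWeakGraph (G.induce S)) : IsWeakForest (G.induce S) :=
  ⟨hG.isAcyclic.induce S, exists_adj_induce hG.exists_adj hS hb, hW⟩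

lemma neighborSet_subset_compl_pair (hls : G.Adj l s) (hl : IsLeaf G l)
    (hs : ∀ y, G.Adj s y → y = l ∨ y = t) :
    ∀ v ∈ ({l, s}ᶜ : Set V), v ≠ t → G.neighborSet v ⊆ {l, s}ᶜ := by
  intro v hv hvt y hy
  simp only [Set.mem_compl_iff, Set.mem_insert_iff, Set.mem_singleton_iff, not_or] at hv ⊢
  refine ⟨fun hyl => hv.2 (hl.eq_of_adj (hyl ▸ hy.symm) hls), fun hys => ?_⟩
  rcases hs v (hys ▸ hy.symm) with h | h
  exacts [hv.1 h, hvt h]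

lemma IsWeakForest.induce_compl_pair (hG : IsWeakForest G) (hls : G.Adj l s) (hl : IsLeaf G l)
    (hs : ∀ y, G.Adj s y → y = l ∨ y = t) (hW : IsWeakGraph (G.induce {l, s}ᶜ)) :
    IsWeakForest (G.induce {l, s}ᶜ) := by
  refine hG.induce (neighborSet_subset_compl_pair hls hl hs) (fun htS => ?_) hW
  simp only [Set.mem_compl_iff, Set.mem_insert_iff, Set.mem_singleton_iff, not_or] at htS ⊢
  by_contra! h
  have hts : ∀ y, G.Adj t y → y = s := by
    intro y hy
    by_contra hys
    have hyl : y = l := by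
      by_contra hyl
      exact h y ⟨hyl, hys⟩ hy
    exact htS.2 (hl.eq_of_adj (hyl ▸ hy.symm) hls)
  obtain ⟨y, hy⟩ := hG.exists_adj t
  have hst : G.Adj s t := (hts y hy ▸ hy).symm
  have ht : IsLeaf G t :=
    isLeaf_of_neighborSet_eq (Set.eq_singleton_iff_unique_mem.mpr ⟨hst.symm, hts⟩)
  exact htS.1 (hG.isWeakGraph.eq_of_isLeaf hst hls.symm ht hl)

lemma IsWeakGraph.exists_of_not_isWeakGraph_induce_compl_pair (hG : IsWeakGraph G)
    (hls : G.Adj l s) (hl : IsLeaf G l) (hs : ∀ y, G.Adj s y → y = l ∨ y = t)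
    (hW : ¬ IsWeakGraph (G.induce {l, s}ᶜ)) :
    ∃ w x, G.Adj s t ∧ G.Adj t w ∧ G.Adj w x ∧ IsLeaf G x ∧ w ∈ ({l, s, t}ᶜ : Set V) ∧
      x ∈ ({l, s, t}ᶜ : Set V) ∧ ∀ y, G.Adj t y → y = s ∨ y = w := by
  obtain ⟨w, x, htS, hwS, hxS, hxt, hwt, hwx, hx, ht, hnt⟩ :=
    hG.exists_of_not_isWeakGraph_induce (neighborSet_subset_compl_pair hls hl hs) hW
  simp only [Set.mem_compl_iff, Set.mem_insert_iff, Set.mem_singleton_iff, not_or]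
    at htS hwS hxS ⊢
  have htl : ∀ y, G.Adj t y → y ∉ ({l, s}ᶜ : Set V) → y = s := by
    intro y hy hyS
    simp only [Set.mem_compl_iff, Set.mem_insert_iff, Set.mem_singleton_iff, not_or,
      not_and_or, not_not] at hyS
    rcases hyS with rfl | rfl
    · exact absurd (hl.eq_of_adj hy.symm hls) htS.2
    · rfl
  obtain ⟨y, hy, hyS⟩ := Set.not_subset.mp hnt
  refine ⟨w, x, htl y hy hyS ▸ hy.symm, hwt.symm, hwx, hx, ⟨hwS.1, hwS.2, hwt.ne⟩,
    ⟨hxS.1, hxS.2, hxt⟩, fun y hy => ?_⟩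
  by_cases hyS : y ∈ ({l, s}ᶜ : Set V)
  · exact .inr (ht y hyS hy)
  · exact .inl (htl y hy hyS)

lemma IsWeakForest.induce_compl_triple (hG : IsWeakForest G) {w x : V} (hls : G.Adj l s)
    (hl : IsLeaf G l) (hs : ∀ y, G.Adj s y → y = l ∨ y = t) (hwx : G.Adj w x)
    (hx : IsLeaf G x) (hxS : x ∈ ({l, s, t}ᶜ : Set V)) (ht : ∀ y, G.Adj t y → y = s ∨ y = w) :
    IsWeakForest (G.induce {l, s, t}ᶜ) := by
  have hS : ∀ v ∈ ({l, s, t}ᶜ : Set V), v ≠ w → G.neighborSet v ⊆ {l, s, t}ᶜ := by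
    intro v hv hvw y hy
    simp only [Set.mem_compl_iff, Set.mem_insert_iff, Set.mem_singleton_iff, not_or] at hv ⊢
    refine ⟨fun hyl => hv.2.1 (hl.eq_of_adj (hyl ▸ hy.symm) hls), fun hys => ?_, fun hyt => ?_⟩
    · rcases hs v (hys ▸ hy.symm) with h | h
      exacts [hv.1 h, hv.2.2 h]
    · rcases ht v (hyt ▸ hy.symm) with h | h
      exacts [hv.2.1 h, hvw h]
  refine hG.induce hS (fun _ => ⟨x, hxS, hwx⟩) (by_contra fun hW => ?_)
  obtain ⟨w', x', -, -, -, hx'w, -, hw'x', hx', hw', -⟩ :=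
    hG.isWeakGraph.exists_of_not_isWeakGraph_induce hS hW
  obtain rfl := hw' x hxS hwx
  exact hx'w (hx.eq_of_adj hw'x' hwx.symm)

lemma IsWeakForest.exists_reduction [Finite V] [Nonempty V] (hG : IsWeakForest G) :
    ∃ S : Set V, S ≠ Set.univ ∧ IsWeakForest (G.induce S) ∧
      ∀ E E', IsSwapPair (G.induce S) E E' → ∃ D D', IsSwapPair G D D' := by
  obtain ⟨u⟩ := ‹Nonempty V›
  obtain ⟨v, huv⟩ := hG.exists_adj u
  obtain ⟨l, s, t, hls, hl, hs⟩ := hG.isAcyclic.exists_leaf_stem huv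
  have hs' : ∀ y, G.Adj s y → y = l ∨ y = t := by
    intro y hy
    by_contra! h
    exact h.1 (hG.isWeakGraph.eq_of_isLeaf hy hls.symm (hs y hy h.2) hl)
  by_cases hW : IsWeakGraph (G.induce {l, s}ᶜ)
  · exact ⟨_, (Set.ne_univ_iff_exists_notMem _).mpr ⟨l, by simp⟩,
      hG.induce_compl_pair hls hl hs' hW, fun E E' h => h.exists_of_induce_compl_pair hls⟩
  obtain ⟨w, x, hst, htw, hwx, hx, hw, hxS, ht⟩ :=
    hG.isWeakGraph.exists_of_not_isWeakGraph_induce_compl_pair hls hl hs' hW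
  have hxleaf : IsLeaf (G.induce {l, s, t}ᶜ) ⟨x, hxS⟩ :=
    (isLeaf_induce_iff (by rw [hx.neighborSet_eq hwx.symm]; simpa using hw)).mpr hx
  refine ⟨_, (Set.ne_univ_iff_exists_notMem _).mpr ⟨l, by simp⟩,
    hG.induce_compl_triple hls hl hs' hwx hx hxS ht, fun E E' h => ?_⟩
  exact h.exists_of_induce_compl_triple hls hst htw hw
    (h.mem_or_mem_of_isLeaf hxleaf (show (G.induce _).Adj ⟨x, hxS⟩ ⟨w, hw⟩ from hwx.symm))

theorem IsWeakForest.exists_isSwapPair [Finite V] (hG : IsWeakForest G) :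
    ∃ D D', IsSwapPair G D D' := by
  induction h : Nat.card V using Nat.strong_induction_on generalizing V with
  | _ n ih =>
  rcases isEmpty_or_nonempty V with hV | hV
  · exact ⟨∅, ∅, isEmptyElim, isEmptyElim, Set.disjoint_empty _, Equiv.refl _,
      fun x => isEmptyElim x.1⟩
  · obtain ⟨S, hS, hGS, hlift⟩ := hG.exists_reduction
    obtain ⟨v, hv⟩ := (Set.ne_univ_iff_exists_notMem S).mp hS
    obtain ⟨E, E', hE⟩ := ih _ (h ▸ Finite.card_subtype_lt hv) hGS rfl
    exact hlift E E' hE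

end

theorem stmt_2 {V : Type*} [Fintype V] (T : SimpleGraph V) (hT : T.IsTree)
    (hnt : 2 ≤ Fintype.card V) (hweak : IsWeakGraph T) :
    ∃ D D' : Set V, IsSwapPair T D D' := by
  have : Nontrivial V := Fintype.one_lt_card_iff_nontrivial.mp hnt
  exact IsWeakForest.exists_isSwapPair
    ⟨hT.isAcyclic, hT.connected.preconnected.exists_adj_of_nontrivial, hweak⟩
end

section
/- For any non-trivial weak tree T, DD_m(T) ≤ S(T), where S(T) is the minimum weight of a simple star partitioning of T. -/
open SimpleGraph

variable {V : Type*}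

/-!
It suffices to find, for every simple star partitioning `P`, a swap pair of size at most the
weight of `P`. Match the centre of every non-trivial star of `P` with one of its satellites, and
extend greedily by edges having an end that is not a chosen satellite. Every unmatched vertex then
has two distinct matched neighbours: a `K₁` part sees two non-trivial parts, and a spare satellite
sees its centre and, not being a leaf, another vertex. Charging each matched pair to a suitable
end shows that there are at most `weight P` pairs. Finally, a tree realises any prescribed pattern
of colour changes along its edges, so the matched vertices can be 2-coloured with every matched
pair split and both colours around every unmatched vertex; the two colour classes are disjoint
dominating sets, perfectly matched by the matching.
-/

open Function

namespace SimpleGraph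

variable {T : SimpleGraph V}

lemma IsTree.concat_or_concat (hT : T.IsTree) {r u w : V} {p : T.Walk r u} {q : T.Walk r w}
    (hp : p.IsPath) (hq : q.IsPath) (h : T.Adj u w) :
    q = p.concat h ∨ p = q.concat h.symm := by
  classical
  by_cases hw : w ∈ p.support
  · right
    have hdrop : p.dropUntil w hw = .cons h.symm .nil :=
      (hT.existsUnique_path w u).unique (hp.dropUntil hw) (by simp [h.ne'])
    have htake : p.takeUntil w hw = q :=
      (hT.existsUnique_path r w).unique (hp.takeUntil hw) hq
    rw [← p.take_spec hw, htake, hdrop, Walk.concat_eq_append]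
  · exact .inl ((hT.existsUnique_path r w).unique hq (hp.concat hw h))

/-- Colour each vertex by the parity of the labels along its path from a fixed root. -/
theorem IsTree.exists_xor_coloring (hT : T.IsTree) (h : Sym2 V → Bool) :
    ∃ c : V → Bool, ∀ u w, T.Adj u w → xor (c u) (c w) = h s(u, w) := by
  obtain ⟨r⟩ := hT.connected.nonempty
  choose p hp using fun x => (hT.existsUnique_path r x).exists
  refine ⟨fun x => (p x).edges.foldl (fun b e => xor b (h e)) false, fun u w huw => ?_⟩
  rcases hT.concat_or_concat (hp u) (hp w) huw with hpw | hpu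
  · simp [hpw, Walk.edges_concat]
  · simp [hpu, Walk.edges_concat, Sym2.eq_swap, Bool.xor_comm (h _)]

end SimpleGraph

-- A matching is encoded as an involution `μ` moving each matched vertex to its partner; the
-- unmatched vertices are its fixed points.

section Involution

variable {G : SimpleGraph V} {μ : V → V}

lemma isDomSet_of_coloring (hμ : Involutive μ) (hadj : ∀ x, μ x ≠ x → G.Adj x (μ x))
    {c : V → Bool} (hmate : ∀ x, μ x ≠ x → c (μ x) = !c x)
    (hfix : ∀ v, μ v = v → ∀ β, ∃ a, μ a ≠ a ∧ c a = β ∧ G.Adj a v) (β : Bool) :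
    IsDomSet G {x | μ x ≠ x ∧ c x = β} := by
  intro v hv
  by_cases hμv : μ v = v
  · obtain ⟨a, ha, hca, hav⟩ := hfix v hμv β
    exact ⟨a, ⟨ha, hca⟩, hav⟩
  · have hcv : c v ≠ β := fun h => hv ⟨hμv, h⟩
    refine ⟨μ v, ⟨by rwa [hμ v, ne_comm], ?_⟩, by simpa [hμ v] using (hadj v hμv).symm⟩
    rw [hmate v hμv, Bool.eq_not.mpr hcv, Bool.not_not]

theorem isSwapPair_of_coloring (hμ : Involutive μ) (hadj : ∀ x, μ x ≠ x → G.Adj x (μ x))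
    {c : V → Bool} (hmate : ∀ x, μ x ≠ x → c (μ x) = !c x)
    (hfix : ∀ v, μ v = v → ∀ β, ∃ a, μ a ≠ a ∧ c a = β ∧ G.Adj a v) :
    IsSwapPair G {x | μ x ≠ x ∧ c x = true} {x | μ x ≠ x ∧ c x = false} := by
  have hflip : ∀ β, ∀ x ∈ {x | μ x ≠ x ∧ c x = β}, μ x ∈ {x | μ x ≠ x ∧ c x = !β} :=
    fun β x ⟨hx, hcx⟩ => ⟨by rwa [hμ x, ne_comm], by rw [hmate x hx, hcx]⟩
  refine ⟨isDomSet_of_coloring hμ hadj hmate hfix _, isDomSet_of_coloring hμ hadj hmate hfix _,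
    Set.disjoint_left.2 fun x hx hx' => by simp_all, ?_⟩
  exact ⟨⟨fun x => ⟨μ x, hflip true x x.2⟩, fun y => ⟨μ y, hflip false y y.2⟩,
    fun x => Subtype.ext (hμ x), fun y => Subtype.ext (hμ y)⟩, fun x => hadj x x.2.1⟩

/-- Around an unmatched vertex `v` with matched neighbours `a ≠ b`, label the edge `va` by
"same colour" and every other edge by "different colour"; a tree realizes any labelling. -/
theorem SimpleGraph.IsTree.exists_isSwapPair (hT : G.IsTree) (hμ : Involutive μ)
    (hadj : ∀ x, μ x ≠ x → G.Adj x (μ x))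
    (hfix : ∀ v, μ v = v → ∃ a b, a ≠ b ∧ G.Adj v a ∧ G.Adj v b ∧ μ a ≠ a ∧ μ b ≠ b) :
    ∃ D D', IsSwapPair G D D' ∧ D ⊆ {x | μ x ≠ x} ∧ ∀ x ∈ D, μ x ∉ D := by
  classical
  choose a b hab hva hvb ha hb using hfix
  set IsChosen : Sym2 V → Prop := fun e => ∃ v hv, e = s(v, a v hv)
  obtain ⟨c, hc⟩ := hT.exists_xor_coloring fun e => !decide (IsChosen e)
  have hmate : ∀ x, μ x ≠ x → c (μ x) = !c x := by
    intro x hx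
    have hne : ¬ IsChosen s(x, μ x) := by
      rintro ⟨v, hv, he⟩
      rcases Sym2.eq_iff.1 he with ⟨rfl, -⟩ | ⟨-, rfl⟩
      · exact hx hv
      · exact hx (by rw [← hv, hμ])
    have := hc x (μ x) (hadj x hx)
    revert this; simp only [hne]; cases c x <;> cases c (μ x) <;> simp
  have hsplit : ∀ v hv, c (b v hv) = !c (a v hv) := by
    intro v hv
    have hnb : ¬ IsChosen s(v, b v hv) := by
      rintro ⟨u, hu, he⟩
      rcases Sym2.eq_iff.1 he with ⟨rfl, h⟩ | ⟨rfl, -⟩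
      · exact hab v hv h.symm
      · exact ha u hu hv
    have hva' := hc v _ (hva v hv)
    have hvb' := hc v _ (hvb v hv)
    revert hva' hvb'; simp only [hnb, show IsChosen s(v, a v hv) from ⟨v, hv, rfl⟩]
    cases c v <;> cases c (a v hv) <;> cases c (b v hv) <;> simp
  refine ⟨_, _, isSwapPair_of_coloring hμ hadj hmate fun v hv β => ?_, fun x hx => hx.1,
    fun x hx hμx => by simpa [hx.2] using (hmate x hx.1).symm.trans hμx.2⟩
  by_cases hβ : c (a v hv) = β
  · exact ⟨a v hv, ha v hv, hβ, (hva v hv).symm⟩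
  · exact ⟨b v hv, hb v hv, by rw [hsplit, Bool.not_eq.mpr hβ], (hvb v hv).symm⟩

end Involution

section MaximalExtension

structure IsMaximalExtension (R : V → V → Prop) (μ₀ μ : V → V) : Prop where
  involutive : Involutive μ
  eq_of_ne : ∀ x, μ₀ x ≠ x → μ x = μ₀ x
  rel : ∀ x, μ₀ x = x → μ x ≠ x → R x (μ x)
  maximal : ∀ x y, R x y → μ x = x → μ y = y → x = y

variable {R : V → V → Prop} {μ₀ μ : V → V}

lemma IsMaximalExtension.fixed_of_fixed (h : IsMaximalExtension R μ₀ μ) {x : V}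
    (hx : μ x = x) : μ₀ x = x :=
  by_contra fun h₀ => h₀ (by rw [← h.eq_of_ne x h₀, hx])

lemma IsMaximalExtension.map_fixed (h : IsMaximalExtension R μ₀ μ) (hμ₀ : Involutive μ₀)
    {y : V} (hy : μ₀ y = y) : μ₀ (μ y) = μ y := by
  by_contra hne
  have h₁ : y = μ₀ (μ y) := by rw [← h.eq_of_ne _ hne, h.involutive]
  have h₂ : μ y = y := by rw [← hμ₀ (μ y), ← h₁, hy]
  exact hne (by rw [h₂, hy])

lemma IsMaximalExtension.adj {G : SimpleGraph V} (h : IsMaximalExtension R μ₀ μ)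
    (hR : ∀ x y, R x y → G.Adj x y) (h₀ : ∀ x, μ₀ x ≠ x → G.Adj x (μ₀ x)) :
    ∀ x, μ x ≠ x → G.Adj x (μ x) := by
  intro x hx
  by_cases hx₀ : μ₀ x = x
  · exact hR _ _ (h.rel x hx₀ hx)
  · rw [h.eq_of_ne x hx₀]; exact h₀ x hx₀

lemma Function.Involutive.addPair [DecidableEq V] {μ : V → V} (hμ : Involutive μ) {x y : V}
    (hx : μ x = x) (hy : μ y = y) :
    Involutive fun z => if z = x then y else if z = y then x else μ z := by
  intro z
  by_cases hzx : z = x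
  · subst hzx; by_cases hzy : y = z <;> simp [hzy]
  by_cases hzy : z = y
  · simp [hzy]
  have hμx : μ z ≠ x := fun h => hzx (by rw [← hμ z, h, hx])
  have hμy : μ z ≠ y := fun h => hzy (by rw [← hμ z, h, hy])
  simp [hzx, hzy, hμx, hμy, hμ z]

theorem exists_isMaximalExtension [Finite V] (hR : ∀ x y, R x y → R y x) (hμ₀ : Involutive μ₀) :
    ∃ μ, IsMaximalExtension R μ₀ μ := by
  classical
  let Good : (V → V) → Prop := fun μ => Involutive μ ∧ (∀ x, μ₀ x ≠ x → μ x = μ₀ x) ∧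
    ∀ x, μ₀ x = x → μ x ≠ x → R x (μ x)
  have : Nonempty {μ // Good μ} := ⟨μ₀, hμ₀, fun _ _ => rfl, fun _ h h' => absurd h h'⟩
  obtain ⟨⟨μ, hμ, hext, hrel⟩, hmax⟩ :=
    Finite.exists_max fun μ : {μ // Good μ} => {x | μ.1 x ≠ x}.ncard
  refine ⟨μ, hμ, hext, hrel, fun x y hxy hx hy => by_contra fun hne => ?_⟩
  let μ' : V → V := fun z => if z = x then y else if z = y then x else μ z
  have hμ' : ∀ z, μ z ≠ z → μ' z = μ z := fun z hz => by
    simp only [μ']; rw [if_neg (by rintro rfl; exact hz hx), if_neg (by rintro rfl; exact hz hy)]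
  have hgood : Good μ' := by
    refine ⟨hμ.addPair hx hy, fun z hz => ?_, fun z hz hz' => ?_⟩
    · rw [hμ' z (by rwa [hext z hz]), hext z hz]
    · by_cases hzx : z = x
      · simpa [μ', hzx] using hxy
      by_cases hzy : z = y
      · simpa [μ', hzy, Ne.symm hne] using hR x y hxy
      have hμz : μ z ≠ z := by simpa [μ', hzx, hzy] using hz'
      rw [hμ' z hμz]; exact hrel z hz hμz
  have hlt : {z | μ z ≠ z}.ncard < {z | μ' z ≠ z}.ncard :=
    Set.ncard_lt_ncard ⟨fun z hz => by simpa [hμ' z hz] using hz,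
      fun hsub => hsub (show μ' x ≠ x by simp [μ', Ne.symm hne]) hx⟩
  exact (hmax ⟨μ', hgood⟩).not_gt hlt

end MaximalExtension

section Leaves

variable {G : SimpleGraph V}

lemma isLeaf_iff {v : V} : IsLeaf G v ↔ ∃ w, G.neighborSet v = {w} := Set.ncard_eq_one

lemma IsLeaf.exists_adj {l : V} (hl : IsLeaf G l) : ∃ s, G.Adj l s :=
  let ⟨s, hs⟩ := isLeaf_iff.1 hl; ⟨s, show s ∈ G.neighborSet l by rw [hs]; rfl⟩

lemma IsLeaf.eq_of_adj_s5 {l a b : V} (hl : IsLeaf G l) (ha : G.Adj l a) (hb : G.Adj l b) :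
    a = b := by
  obtain ⟨s, hs⟩ := isLeaf_iff.1 hl
  have ha' : a ∈ G.neighborSet l := ha
  have hb' : b ∈ G.neighborSet l := hb
  rw [hs] at ha' hb'
  exact ha'.trans hb'.symm

lemma exists_adj_ne_of_not_isLeaf [Finite V] [Nontrivial V] (hG : G.Connected) {v : V}
    (hv : ¬ IsLeaf G v) (a : V) : ∃ b, b ≠ a ∧ G.Adj v b := by
  obtain ⟨w, hw⟩ := exists_ne v
  have hpos : 0 < (G.neighborSet v).ncard :=
    (Set.ncard_pos (Set.toFinite _)).2 ((hG v w).nonempty_neighborSet_left hw.symm)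
  have hgt : 1 < (G.neighborSet v).ncard := by unfold IsLeaf at hv; omega
  obtain ⟨b, hb, hba⟩ := Set.exists_ne_of_one_lt_ncard hgt a
  exact ⟨b, hba, hb⟩

def IsPendantEdge (G : SimpleGraph V) (v w : V) : Prop := G.Adj v w ∧ (IsLeaf G v ∨ IsLeaf G w)

lemma IsPendantEdge.symm {v w : V} (h : IsPendantEdge G v w) : IsPendantEdge G w v :=
  ⟨h.1.symm, h.2.symm⟩

lemma IsWeakGraph.eq_of_isPendantEdge (hG : IsWeakGraph G) {v w₁ w₂ : V}
    (h₁ : IsPendantEdge G v w₁) (h₂ : IsPendantEdge G v w₂) : w₁ = w₂ := by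
  by_cases hv : IsLeaf G v
  · exact hv.eq_of_adj_s5 h₁.1 h₂.1
  · by_contra hne
    exact hG v ⟨w₁, w₂, hne, h₁.1, h₂.1, h₁.2.resolve_left hv, h₂.2.resolve_left hv⟩

lemma IsWeakGraph.exists_involutive_pendant (hG : IsWeakGraph G) :
    ∃ μ : V → V, Involutive μ ∧ (∀ x, μ x ≠ x → G.Adj x (μ x)) ∧
      ∀ v w, IsPendantEdge G v w → μ v = w := by
  classical
  let μ : V → V := fun v => if h : ∃ w, IsPendantEdge G v w then h.choose else v
  have hμ : ∀ v w, IsPendantEdge G v w → μ v = w := fun v w h => by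
    have hex : ∃ w, IsPendantEdge G v w := ⟨w, h⟩
    simp only [μ, dif_pos hex]
    exact hG.eq_of_isPendantEdge hex.choose_spec h
  refine ⟨μ, fun v => ?_, fun v hv => ?_, hμ⟩
  · by_cases h : ∃ w, IsPendantEdge G v w
    · obtain ⟨w, hw⟩ := h
      rw [hμ v w hw, hμ w v hw.symm]
    · simp only [μ, dif_neg h]
  · by_cases h : ∃ w, IsPendantEdge G v w
    · obtain ⟨w, hw⟩ := h
      rw [hμ v w hw]; exact hw.1
    · exact absurd (by simp only [μ, dif_neg h]) hv

end Leaves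

section Existence

variable {T : SimpleGraph V}

lemma isStarSet_pair {a b : V} (h : b ≠ a → T.Adj a b) : IsStarSet T {a, b} := by
  refine ⟨a, by simp, fun x hx hxa => ?_, fun x hx y hy hxa hya => ?_⟩
  · obtain rfl | rfl := hx
    · exact absurd rfl hxa
    · exact h hxa
  · obtain rfl | rfl := hx
    · exact absurd rfl hxa
    · obtain rfl | rfl := hy
      · exact absurd rfl hya
      · exact T.irrefl

lemma existsUnique_pair_of_involutive [Fintype V] [DecidableEq (Set V)] {ν : V → V}
    (hν : Involutive ν) (v : V) :
    ∃! S, S ∈ Finset.univ.image (fun x => ({x, ν x} : Set V)) ∧ v ∈ S := by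
  refine ⟨{v, ν v}, ⟨Finset.mem_image_of_mem _ (Finset.mem_univ v), by simp⟩, ?_⟩
  rintro S ⟨hS, hvS⟩
  obtain ⟨x, -, rfl⟩ := Finset.mem_image.1 hS
  obtain rfl | rfl := hvS
  · rfl
  · rw [hν, Set.pair_comm]

/-- Pair up the pendant edges and extend to a maximal matching; the unmatched vertices are the
`K₁` parts, and their neighbours are matched by maximality, in distinct parts since a tree has
no triangle. -/
theorem SimpleGraph.IsTree.exists_isSSP [Fintype V] (hT : T.IsTree) (hnt : 2 ≤ Fintype.card V)
    (hweak : IsWeakGraph T) : ∃ P, IsSSP T P := by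
  classical
  have : Nontrivial V := Fintype.one_lt_card_iff_nontrivial.1 hnt
  obtain ⟨μ₀, hμ₀, hμ₀adj, hμ₀pend⟩ := hweak.exists_involutive_pendant
  obtain ⟨ν, hν⟩ := exists_isMaximalExtension (fun _ _ h => h.symm) hμ₀ (R := T.Adj)
  have hνadj := hν.adj (fun _ _ h => h) hμ₀adj
  have hνpend : ∀ v w, IsPendantEdge T v w → ν v = w := fun v w h => by
    rw [hν.eq_of_ne v (by rw [hμ₀pend v w h]; exact h.1.ne'), hμ₀pend v w h]
  have hcard : ∀ v, ν v ≠ v → ({v, ν v} : Set V).ncard = 2 := fun v hv =>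
    Set.ncard_pair hv.symm
  refine ⟨Finset.univ.image fun x => {x, ν x}, existsUnique_pair_of_involutive hν.involutive,
    fun S hS => ?_, fun v l hvl hl _ => ?_, fun S hS hS1 => ?_⟩
  · obtain ⟨x, -, rfl⟩ := Finset.mem_image.1 hS
    exact isStarSet_pair fun h => hνadj x h
  · rw [← hνpend v l ⟨hvl, .inr hl⟩]
    exact Finset.mem_image_of_mem _ (Finset.mem_univ v)
  obtain ⟨u, -, rfl⟩ := Finset.mem_image.1 hS
  have hu : ν u = u := by_contra fun h => by rw [hcard u h] at hS1; simp at hS1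
  have hmoved : ∀ a, T.Adj u a → ν a ≠ a := fun a hua ha => hua.ne (hν.maximal u a hua hu ha)
  have hul : ¬ IsLeaf T u := fun hl =>
    let ⟨w, hw⟩ := hl.exists_adj; hw.ne (by rw [← hνpend u w ⟨hw, .inl hl⟩, hu])
  obtain ⟨a, -, hua⟩ := exists_adj_ne_of_not_isLeaf hT.connected hul u
  obtain ⟨b, hba, hub⟩ := exists_adj_ne_of_not_isLeaf hT.connected hul a
  refine ⟨{a, ν a}, Finset.mem_image_of_mem _ (Finset.mem_univ a),
    {b, ν b}, Finset.mem_image_of_mem _ (Finset.mem_univ b), fun hab => ?_,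
    by rw [hcard a (hmoved a hua)]; decide, by rw [hcard b (hmoved b hub)]; decide,
    ⟨u, by simp, a, by simp, hua⟩, ⟨u, by simp, b, by simp, hub⟩⟩
  have hb : b ∈ ({a, ν a} : Set V) := hab ▸ by simp
  obtain rfl | rfl := hb
  · exact hba rfl
  · exact hT.isAcyclic.cliqueFree le_rfl ({u, a, ν a} : Finset V)
      (is3Clique_triple_iff.2 ⟨hua, hub, hνadj a (hmoved a hua)⟩)

end Existence

namespace IsSSP

variable {T : SimpleGraph V} {P : Finset (Set V)}

noncomputable def part (hP : IsSSP T P) (v : V) : Set V := (hP.cover v).exists.choose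

lemma part_mem (hP : IsSSP T P) (v : V) : hP.part v ∈ P := (hP.cover v).exists.choose_spec.1

lemma mem_part (hP : IsSSP T P) (v : V) : v ∈ hP.part v := (hP.cover v).exists.choose_spec.2

lemma part_eq (hP : IsSSP T P) {S : Set V} {v : V} (hS : S ∈ P) (hv : v ∈ S) :
    hP.part v = S :=
  (hP.cover v).unique ⟨hP.part_mem v, hP.mem_part v⟩ ⟨hS, hv⟩

lemma part_eq_of_mem (hP : IsSSP T P) {v w : V} (hw : w ∈ hP.part v) :
    hP.part w = hP.part v :=
  hP.part_eq (hP.part_mem v) hw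

lemma part_eq_pair (hP : IsSSP T P) (hweak : IsWeakGraph T) {v w : V}
    (h : IsPendantEdge T v w) : hP.part v = {v, w} := by
  refine hP.part_eq ?_ (by simp)
  rcases h.2 with hv | hw
  · rw [Set.pair_comm]
    exact hP.weakStem w v h.1.symm hv fun l hl hl' =>
      hweak.eq_of_isPendantEdge ⟨hl, .inr hl'⟩ h.symm
  · exact hP.weakStem v w h.1 hw fun l hl hl' => hweak.eq_of_isPendantEdge ⟨hl, .inr hl'⟩ h

/-- The satellite `sat v` is the non-centre vertex of the star `part v` to be matched with its
centre `ctr v`. -/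
structure CenterChoice (hP : IsSSP T P) where
  ctr : V → V
  sat : V → V
  ctr_mem : ∀ v, ctr v ∈ hP.part v
  sat_mem : ∀ v, sat v ∈ hP.part v
  adj_ctr : ∀ v, ∀ x ∈ hP.part v, x ≠ ctr v → T.Adj (ctr v) x
  ctr_eq : ∀ v, ∀ w ∈ hP.part v, ctr w = ctr v
  sat_eq : ∀ v, ∀ w ∈ hP.part v, sat w = sat v
  sat_ne_ctr : ∀ v, 2 ≤ (hP.part v).ncard → sat v ≠ ctr v

lemma nonempty_centerChoice (hP : IsSSP T P) : Nonempty hP.CenterChoice := by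
  have hchoice : ∀ S : P, ∃ c s : V, c ∈ S.1 ∧ s ∈ S.1 ∧ (∀ x ∈ S.1, x ≠ c → T.Adj c x) ∧
      (2 ≤ S.1.ncard → s ≠ c) := by
    intro ⟨S, hS⟩
    obtain ⟨c, hc, hadj, -⟩ := hP.star S hS
    by_cases h2 : 2 ≤ S.ncard
    · obtain ⟨s, hs, hsc⟩ := Set.exists_ne_of_one_lt_ncard h2 c
      exact ⟨c, s, hc, hs, hadj, fun _ => hsc⟩
    · exact ⟨c, c, hc, hc, hadj, fun h => absurd h h2⟩
  choose c s hc hs hadj hsc using hchoice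
  let part' : V → P := fun v => ⟨hP.part v, hP.part_mem v⟩
  have hpart' : ∀ v, ∀ w ∈ hP.part v, part' w = part' v :=
    fun v w hw => Subtype.ext (hP.part_eq_of_mem hw)
  exact ⟨⟨c ∘ part', s ∘ part', fun v => hc (part' v), fun v => hs (part' v),
    fun v => hadj (part' v),
    fun v w hw => congrArg c (hpart' v w hw), fun v w hw => congrArg s (hpart' v w hw),
    fun v h => hsc (part' v) h⟩⟩

namespace CenterChoice

variable {hP : IsSSP T P} (C : hP.CenterChoice)

lemma part_eq_singleton_of_sat_eq_ctr [Finite V] {v : V} (h : C.sat v = C.ctr v) :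
    hP.part v = {v} := by
  have h1 : (hP.part v).ncard = 1 := by
    have := (Set.ncard_pos (Set.toFinite _)).2 ⟨v, hP.mem_part v⟩
    have := mt (C.sat_ne_ctr v) (not_not.2 h)
    omega
  obtain ⟨z, hz⟩ := Set.ncard_eq_one.1 h1
  have hv := hP.mem_part v
  rw [hz, Set.mem_singleton_iff] at hv
  rw [hz, hv]

/-- Each part contributes all of its vertices but its satellite. -/
lemma ncard_sat_ne_le_SSPweight [Finite V] : {v | C.sat v ≠ v}.ncard ≤ SSPweight P := by
  have hsub : {v | C.sat v ≠ v} ⊆ ⋃ S ∈ P, S \ C.sat '' S := by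
    intro v hv
    refine Set.mem_biUnion (hP.part_mem v) ⟨hP.mem_part v, ?_⟩
    rintro ⟨w, hw, rfl⟩
    exact hv (C.sat_eq _ w hw).symm
  refine (Set.ncard_le_ncard hsub (Set.toFinite _)).trans
    ((Finset.set_ncard_biUnion_le P _).trans (Finset.sum_le_sum fun S hS => ?_))
  obtain ⟨c, hc, -⟩ := hP.star S hS
  have hpc : hP.part c = S := hP.part_eq hS hc
  calc (S \ C.sat '' S).ncard ≤ (S \ {C.sat c}).ncard :=
        Set.ncard_le_ncard (Set.sdiff_subset_sdiff_right (by simpa using ⟨c, hc, rfl⟩))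
    _ = S.ncard - 1 := Set.ncard_sdiff_singleton_of_mem (hpc ▸ C.sat_mem c)

variable [DecidableEq V]

def centerMatching (v : V) : V := Equiv.swap (C.ctr v) (C.sat v) v

lemma centerMatching_mem (v : V) : C.centerMatching v ∈ hP.part v := by
  unfold centerMatching
  rw [Equiv.swap_apply_def]
  split_ifs
  exacts [C.sat_mem v, C.ctr_mem v, hP.mem_part v]

lemma involutive_centerMatching : Involutive C.centerMatching := fun v => by
  have hmem := C.centerMatching_mem v
  simp only [centerMatching] at hmem ⊢
  rw [C.ctr_eq v _ hmem, C.sat_eq v _ hmem, Equiv.swap_apply_self]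

lemma centerMatching_eq_self_iff {v : V} :
    C.centerMatching v = v ↔ C.sat v = C.ctr v ∨ (v ≠ C.ctr v ∧ v ≠ C.sat v) := by
  unfold centerMatching
  generalize C.ctr v = c
  generalize C.sat v = s
  rw [Equiv.swap_apply_def]
  split_ifs with h1 h2 <;> subst_vars <;> tauto

lemma adj_centerMatching {v : V} (hv : C.centerMatching v ≠ v) :
    T.Adj v (C.centerMatching v) := by
  have hsc : C.sat v ≠ C.ctr v := fun h => hv (C.centerMatching_eq_self_iff.2 (.inl h))
  have hs := C.adj_ctr v _ (C.sat_mem v) hsc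
  unfold centerMatching at hv ⊢
  rw [Equiv.swap_apply_def] at hv ⊢
  split_ifs at hv ⊢ with h1 h2
  · convert hs
  · convert hs.symm
  · exact absurd rfl hv

lemma centerMatching_ctr (v : V) : C.centerMatching (C.ctr v) = C.sat v := by
  simp only [centerMatching, C.ctr_eq v _ (C.ctr_mem v), C.sat_eq v _ (C.ctr_mem v),
    Equiv.swap_apply_left]

lemma sat_ne_ctr_of_centerMatching_ne {v : V} (hv : C.centerMatching v ≠ v) :
    C.sat v ≠ C.ctr v :=
  fun h => hv (C.centerMatching_eq_self_iff.2 (.inl h))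

def IsAddable (x y : V) : Prop := T.Adj x y ∧ (C.sat x ≠ x ∨ C.sat y ≠ y)

variable {C} {μ : V → V}

lemma moved_of_adj_fixed (hμ : IsMaximalExtension C.IsAddable C.centerMatching μ) {v a : V}
    (hv : μ v = v) (hva : T.Adj v a) (h : C.sat v ≠ v ∨ C.sat a ≠ a) : μ a ≠ a :=
  fun ha => hva.ne (hμ.maximal v a ⟨hva, h⟩ hv ha)

lemma moved_of_adj_fixed_of_sat_ne_ctr
    (hμ : IsMaximalExtension C.IsAddable C.centerMatching μ) {v a : V} (hv : μ v = v)
    (hva : T.Adj v a) (hsc : C.sat a ≠ C.ctr a) : μ a ≠ a := by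
  by_cases has : C.sat a = a
  · have ha₀ : C.centerMatching a ≠ a := by
      rw [Ne, C.centerMatching_eq_self_iff]; tauto
    rwa [hμ.eq_of_ne a ha₀]
  · exact moved_of_adj_fixed hμ hv hva (.inr has)

/-- An unmatched vertex is either a `K₁` part, adjacent to two non-trivial parts, or a spare
satellite of a star, adjacent to the (matched) centre and, not being a leaf, to some other
vertex; maximality matches those neighbours. -/
theorem exists_adj_moved_of_fixed [Finite V] [Nontrivial V] (hT : T.Connected)
    (hweak : IsWeakGraph T) (hμ : IsMaximalExtension C.IsAddable C.centerMatching μ) {v : V}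
    (hv : μ v = v) : ∃ a b, a ≠ b ∧ T.Adj v a ∧ T.Adj v b ∧ μ a ≠ a ∧ μ b ≠ b := by
  by_cases hsc : C.sat v = C.ctr v
  · have hpart := C.part_eq_singleton_of_sat_eq_ctr hsc
    obtain ⟨A, hA, B, hB, hAB, hA1, hB1, ⟨s, hs, a, ha, hsa⟩, ⟨s', hs', b, hb, hsb⟩⟩ :=
      hP.k1 _ (hP.part_mem v) (by rw [hpart, Set.ncard_singleton])
    rw [hpart, Set.mem_singleton_iff] at hs hs'
    subst hs hs'
    have htwo : ∀ a, ∀ A ∈ P, a ∈ A → A.ncard ≠ 1 → C.sat a ≠ C.ctr a := by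
      intro a A hA ha h1
      have := (Set.ncard_pos (Set.toFinite A)).2 ⟨a, ha⟩
      exact C.sat_ne_ctr a (by rw [hP.part_eq hA ha]; omega)
    refine ⟨a, b, fun hab => hAB ?_, hsa, hsb,
      moved_of_adj_fixed_of_sat_ne_ctr hμ hv hsa (htwo a A hA ha hA1),
      moved_of_adj_fixed_of_sat_ne_ctr hμ hv hsb (htwo b B hB hb hB1)⟩
    rw [← hP.part_eq hA ha, ← hP.part_eq hB hb, hab]
  · obtain ⟨hvc, hvs⟩ :=
      (C.centerMatching_eq_self_iff.1 (hμ.fixed_of_fixed hv)).resolve_left hsc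
    have hadj : T.Adj v (C.ctr v) := (C.adj_ctr v v (hP.mem_part v) hvc).symm
    have hleaf : ¬ IsLeaf T v := fun hl => by
      obtain ⟨w, hw⟩ := hl.exists_adj
      have hc := C.ctr_mem v
      have hs := C.sat_mem v
      rw [hP.part_eq_pair hweak ⟨hw, .inl hl⟩] at hc hs
      simp only [Set.mem_insert_iff, Set.mem_singleton_iff] at hc hs
      exact hsc ((hs.resolve_left (Ne.symm hvs)).trans (hc.resolve_left (Ne.symm hvc)).symm)
    obtain ⟨b, hb, hvb⟩ := exists_adj_ne_of_not_isLeaf hT hleaf (C.ctr v)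
    have hctr : C.sat (C.ctr v) ≠ C.ctr (C.ctr v) := by
      rwa [C.sat_eq v _ (C.ctr_mem v), C.ctr_eq v _ (C.ctr_mem v)]
    exact ⟨C.ctr v, b, Ne.symm hb, hadj, hvb,
      moved_of_adj_fixed_of_sat_ne_ctr hμ hv hadj hctr,
      moved_of_adj_fixed hμ hv hvb (.inl (Ne.symm hvs))⟩

variable (C μ) in
/-- A centre–satellite pair is charged to its centre, any other matched pair to an end that is
not a chosen satellite. -/
def charge (x : V) : V :=
  if C.centerMatching x ≠ x then C.ctr x else if C.sat x ≠ x then x else μ x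

lemma sat_charge_ne (hμ : IsMaximalExtension C.IsAddable C.centerMatching μ) {x : V}
    (hx : μ x ≠ x) : C.sat (charge C μ x) ≠ charge C μ x := by
  unfold charge
  split_ifs with h₁ h₂
  · rw [C.sat_eq x _ (C.ctr_mem x)]; exact C.sat_ne_ctr_of_centerMatching_ne h₁
  · exact h₂
  · exact (hμ.rel x (not_not.1 h₁) hx).2.resolve_left h₂

lemma charge_ne_charge (hμ : IsMaximalExtension C.IsAddable C.centerMatching μ) {x y : V}
    (hx : C.centerMatching x ≠ x) (hy : C.centerMatching y = y) :
    charge C μ x ≠ charge C μ y := by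
  have hgy : C.centerMatching (charge C μ y) = charge C μ y := by
    simp only [charge, hy, ne_eq, not_true_eq_false, if_false]
    split_ifs
    exacts [hμ.map_fixed C.involutive_centerMatching hy, hy]
  have hgx : C.centerMatching (charge C μ x) ≠ charge C μ x := by
    simp only [charge, if_pos hx, C.centerMatching_ctr]
    exact C.sat_ne_ctr_of_centerMatching_ne hx
  exact fun h => hgx (h ▸ hgy)

lemma eq_or_eq_centerMatching_of_ctr_eq {x y : V} (hx : C.centerMatching x ≠ x)
    (hy : C.centerMatching y ≠ y) (hxy : C.ctr x = C.ctr y) :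
    y = x ∨ y = C.centerMatching x := by
  have hs : C.sat y = C.sat x := by
    rw [← C.sat_eq x _ (C.ctr_mem x), hxy, C.sat_eq y _ (C.ctr_mem y)]
  have hsc := C.sat_ne_ctr_of_centerMatching_ne hx
  have hxcs : x = C.ctr x ∨ x = C.sat x := by
    have := mt C.centerMatching_eq_self_iff.2 hx; tauto
  have hycs : y = C.ctr y ∨ y = C.sat y := by
    have := mt C.centerMatching_eq_self_iff.2 hy; tauto
  rw [← hxy, hs] at hycs
  simp only [centerMatching]
  generalize C.ctr x = c at *
  generalize C.sat x = s at *
  rcases hxcs with rfl | rfl <;> rcases hycs with rfl | rfl <;> simp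

lemma eq_or_eq_of_charge_eq (hμ : IsMaximalExtension C.IsAddable C.centerMatching μ) {x y : V}
    (hxy : charge C μ x = charge C μ y) : y = x ∨ y = μ x := by
  by_cases hx₀ : C.centerMatching x = x <;> by_cases hy₀ : C.centerMatching y = y
  · simp only [charge, hx₀, hy₀, ne_eq, not_true_eq_false, if_false] at hxy
    split_ifs at hxy
    · exact .inl (hμ.involutive.injective hxy).symm
    · exact .inr hxy.symm
    · exact .inr (by rw [hxy, hμ.involutive])
    · exact .inl hxy.symm
  · exact absurd hxy.symm (charge_ne_charge hμ hy₀ hx₀)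
  · exact absurd hxy (charge_ne_charge hμ hx₀ hy₀)
  · simp only [charge, if_pos hx₀, if_pos hy₀] at hxy
    rw [hμ.eq_of_ne x hx₀]
    exact C.eq_or_eq_centerMatching_of_ctr_eq hx₀ hy₀ hxy

theorem ncard_le_SSPweight_of_transversal [Finite V]
    (hμ : IsMaximalExtension C.IsAddable C.centerMatching μ) {D : Set V}
    (hD : D ⊆ {x | μ x ≠ x}) (htr : ∀ x ∈ D, μ x ∉ D) : D.ncard ≤ SSPweight P := by
  refine (Set.ncard_le_ncard_of_injOn (charge C μ) (fun x hx => sat_charge_ne hμ (hD hx))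
    (fun x hx y hy hxy => ?_) (Set.toFinite _)).trans C.ncard_sat_ne_le_SSPweight
  rcases eq_or_eq_of_charge_eq hμ hxy with h | h
  · exact h.symm
  · exact absurd (h ▸ hy) (htr x hx)

end CenterChoice

end IsSSP

theorem IsSSP.DDm_le_SSPweight [Fintype V] {T : SimpleGraph V} {P : Finset (Set V)}
    (hT : T.IsTree) (hnt : 2 ≤ Fintype.card V) (hweak : IsWeakGraph T) (hP : IsSSP T P) :
    DDm T ≤ SSPweight P := by
  classical
  have : Nontrivial V := Fintype.one_lt_card_iff_nontrivial.1 hnt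
  obtain ⟨C⟩ := hP.nonempty_centerChoice
  obtain ⟨μ, hμ⟩ := exists_isMaximalExtension (R := C.IsAddable)
    (fun x y h => ⟨h.1.symm, h.2.symm⟩) C.involutive_centerMatching
  obtain ⟨D, D', hDD', hD, htr⟩ := hT.exists_isSwapPair hμ.involutive
    (hμ.adj (fun _ _ h => h.1) fun _ => C.adj_centerMatching)
    fun v hv => C.exists_adj_moved_of_fixed hT.connected hweak hμ hv
  calc DDm T ≤ D.ncard := sInf_le ⟨D, D', hDD', rfl⟩
    _ ≤ SSPweight P := by exact_mod_cast C.ncard_le_SSPweight_of_transversal hμ hD htr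

theorem stmt_5 {V : Type*} [Fintype V] (T : SimpleGraph V) (hT : T.IsTree)
    (hnt : 2 ≤ Fintype.card V) (hweak : IsWeakGraph T) :
    DDm T ≤ (starS T : ℕ∞) := by
  obtain ⟨P₀, hP₀⟩ := hT.exists_isSSP hnt hweak
  obtain ⟨P, hP, hw⟩ := Nat.sInf_mem (s := {w | ∃ P, IsSSP T P ∧ SSPweight P = w})
    ⟨_, P₀, hP₀, rfl⟩
  rw [starS, ← hw]
  exact hP.DDm_le_SSPweight hT hnt hweak
end

section
/- If T is a non-trivial tree, then γ(T) = α(T) if and only if T is obtained from some tree H of order |V(T)|/2 by attaching exactly one pendant leaf to each vertex of H (i.e., T is the corona H ∘ K_1). -/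
open SimpleGraph

variable {V : Type*}

/-- `G` is a corona `H ∘ K₁`: obtained from `H = G[W]` by attaching exactly one
pendant leaf to each vertex of `W`. -/
def IsCorona {V : Type*} (G : SimpleGraph V) : Prop :=
  ∃ W : Set V,
    (∀ v, v ∉ W → IsLeaf G v ∧ ∃ w ∈ W, G.Adj w v) ∧
    (∀ w ∈ W, ∃! l, l ∉ W ∧ G.Adj w l) ∧
    (G.induce W).Connected

/-!
Call `W` a corona set of `G` when every vertex outside `W` has at most one neighbour, lying in
`W`, and every vertex of `W` has exactly one neighbour outside `W`. The closed neighbourhoods of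
the vertices outside `W` partition the vertex set; an independent set meets each of them at most
once and a dominating set at least once, so `γ = α = |Wᶜ|`.

Conversely let `γ(G) = α(G)` for a finite forest `G`. No vertex carries two leaves: they could
replace it in a maximum independent set, or it could replace them in a dominating set. Take a
leaf `v` with neighbour `s` and delete the edges at `s`: `γ` grows by at least one and `α` by at
most one, so by induction the smaller forest has a corona set `W'`, chosen to contain as many
neighbours of `s` as possible. A neighbour `u ≠ v` of `s` outside `W'` would be the leaf of some
`w ∈ W'`; if `w` is a leaf of `G`, exchanging `u` and `w` contradicts the choice of `W'`, and
otherwise `(W' ∪ isolated vertices) \ {w, v}` dominates `G` with fewer than `α(G)` vertices.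
Hence `W' ∪ {s}` is a corona set of `G`. In a tree with at least two vertices nothing is
isolated, and `T[W]` is connected since only leaves lie outside `W`.
-/

theorem IsLeaf.neighborSet_eq_s10 {G : SimpleGraph V} {l s : V} (hl : IsLeaf G l) (hsl : G.Adj s l) :
    G.neighborSet l = {s} := by
  obtain ⟨a, ha⟩ := Set.ncard_eq_one.1 hl
  have hs : s ∈ G.neighborSet l := hsl.symm
  rw [ha, Set.mem_singleton_iff] at hs
  rw [ha, hs]

theorem eq_of_adj_of_neighborSet_eq {G : SimpleGraph V} {x s u : V}
    (hx : G.neighborSet x = {s}) (h : G.Adj x u) : u = s := by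
  rwa [← mem_neighborSet, hx] at h

theorem adj_of_neighborSet_eq {G : SimpleGraph V} {x s : V} (hx : G.neighborSet x = {s}) :
    G.Adj s x :=
  (show s ∈ G.neighborSet x from hx ▸ rfl).symm

theorem SimpleGraph.IsAcyclic.exists_neighborSet_eq_singleton [Finite V] {G : SimpleGraph V}
    (hG : G.IsAcyclic) (hne : G ≠ ⊥) : ∃ v s, G.neighborSet v = {s} := by
  obtain ⟨a, b, hab⟩ := ne_bot_iff_exists_adj.1 hne
  have : Nonempty V := ⟨a⟩
  obtain ⟨u, v, p, hp, hmax⟩ := Walk.exists_isPath_forall_isPath_length_le_length G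
  have hnil : ¬ p.Nil := fun hnil => by
    have := hmax a b hab.toWalk hab.isPath_toWalk
    simp [Walk.length_eq_zero_iff.2 hnil] at this
  refine ⟨u, p.snd, Set.eq_singleton_iff_unique_mem.2
    ⟨p.adj_snd hnil, fun w huw => hG.eq_snd_of_adj_start hp huw ?_⟩⟩
  by_contra hw
  have := hmax _ _ (p.cons huw.symm) (hp.cons hw)
  simp at this

theorem IsDomSet.mem_of_neighborSet_eq_empty {G : SimpleGraph V} {D : Set V} (hD : IsDomSet G D)
    {x : V} (hx : G.neighborSet x = ∅) : x ∈ D := by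
  by_contra hxD
  obtain ⟨u, -, hux⟩ := hD x hxD
  exact (hx ▸ hux.symm : u ∈ (∅ : Set V))

section Numbers

variable (G : SimpleGraph V)

theorem domNum_le_ncard {D : Set V} (hD : IsDomSet G D) : domNum G ≤ D.ncard :=
  Nat.sInf_le ⟨D, hD, rfl⟩

theorem exists_isDomSet_ncard_eq_domNum : ∃ D, IsDomSet G D ∧ D.ncard = domNum G :=
  Nat.sInf_mem (s := {n | ∃ D : Set V, IsDomSet G D ∧ D.ncard = n})
    ⟨_, Set.univ, fun v hv => absurd (Set.mem_univ v) hv, rfl⟩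

variable [Finite V]

theorem bddAbove_indepSet_ncard :
    BddAbove {n | ∃ I : Set V, (∀ a ∈ I, ∀ b ∈ I, ¬ G.Adj a b) ∧ I.ncard = n} :=
  ⟨Nat.card V, by rintro _ ⟨I, -, rfl⟩; exact Set.ncard_le_card I⟩

theorem ncard_le_indepNum {I : Set V} (hI : G.IsIndepSet I) : I.ncard ≤ _root_.indepNum G :=
  le_csSup (bddAbove_indepSet_ncard G) ⟨I, fun _ ha _ hb hab => hI ha hb hab.ne hab, rfl⟩

theorem exists_isIndepSet_ncard_eq_indepNum :
    ∃ I, G.IsIndepSet I ∧ I.ncard = _root_.indepNum G := by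
  obtain ⟨I, hI, hcard⟩ := Nat.sSup_mem
    (s := {n | ∃ I : Set V, (∀ a ∈ I, ∀ b ∈ I, ¬ G.Adj a b) ∧ I.ncard = n})
    ⟨0, ∅, by simp, by simp⟩ (bddAbove_indepSet_ncard G)
  exact ⟨I, fun a ha b hb _ => hI a ha b hb, hcard⟩

variable {G}

theorem mem_of_isIndepSet_of_ncard_eq_indepNum {I : Set V} (hI : G.IsIndepSet I)
    (hmax : I.ncard = _root_.indepNum G) {x : V} (hx : ∀ u ∈ I, ¬ G.Adj u x) : x ∈ I := by
  by_contra hxI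
  have := ncard_le_indepNum G (hI.insert fun u hu _ => ⟨fun hxu => hx u hu hxu.symm, hx u hu⟩)
  rw [Set.ncard_insert_of_notMem hxI] at this
  omega

theorem isDomSet_of_isIndepSet_of_ncard_eq_indepNum {I : Set V} (hI : G.IsIndepSet I)
    (hmax : I.ncard = _root_.indepNum G) : IsDomSet G I := fun v hv => by
  by_contra! h
  exact hv (mem_of_isIndepSet_of_ncard_eq_indepNum hI hmax h)

variable (G)

theorem domNum_le_indepNum : domNum G ≤ _root_.indepNum G := by
  obtain ⟨I, hI, hmax⟩ := exists_isIndepSet_ncard_eq_indepNum G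
  exact hmax ▸ domNum_le_ncard G (isDomSet_of_isIndepSet_of_ncard_eq_indepNum hI hmax)

end Numbers

section Leaves

variable [Finite V] {G : SimpleGraph V} {s x y : V}

theorem notMem_of_isIndepSet_of_ncard_eq_indepNum {I : Set V} (hI : G.IsIndepSet I)
    (hmax : I.ncard = _root_.indepNum G) (hx : G.neighborSet x = {s})
    (hy : G.neighborSet y = {s}) (hxy : x ≠ y) : s ∉ I := by
  intro hs
  have hsx := adj_of_neighborSet_eq hx
  have hxI : x ∉ I := fun h => hI hs h hsx.ne hsx
  set J := insert x (I \ {s})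
  have hJ : G.IsIndepSet J := (hI.mono Set.sdiff_subset).insert fun u hu _ =>
    ⟨fun h => hu.2 (eq_of_adj_of_neighborSet_eq hx h),
      fun h => hu.2 (eq_of_adj_of_neighborSet_eq hx h.symm)⟩
  have hJmax : J.ncard = _root_.indepNum G := by
    rw [Set.ncard_insert_of_notMem fun h => hxI h.1, Set.ncard_sdiff_singleton_add_one hs, hmax]
  have hyJ : y ∈ J := mem_of_isIndepSet_of_ncard_eq_indepNum hJ hJmax fun u hu huy => by
    obtain rfl := eq_of_adj_of_neighborSet_eq hy huy.symm
    rcases hu with rfl | hu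
    · exact hsx.ne rfl
    · exact hu.2 rfl
  rcases hyJ with rfl | hyI
  · exact hxy rfl
  · exact hI hs hyI.1 (adj_of_neighborSet_eq hy).ne (adj_of_neighborSet_eq hy)

theorem eq_of_neighborSet_eq_of_domNum_eq_indepNum (h : domNum G = _root_.indepNum G)
    (hx : G.neighborSet x = {s}) (hy : G.neighborSet y = {s}) : x = y := by
  by_contra hxy
  obtain ⟨I, hI, hmax⟩ := exists_isIndepSet_ncard_eq_indepNum G
  have hs := notMem_of_isIndepSet_of_ncard_eq_indepNum hI hmax hx hy hxy
  have hleaf : ∀ {l}, G.neighborSet l = {s} → l ∈ I := fun hl =>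
    mem_of_isIndepSet_of_ncard_eq_indepNum hI hmax fun u hu hul =>
      hs (eq_of_adj_of_neighborSet_eq hl hul.symm ▸ hu)
  have hxyI : {x, y} ⊆ I := Set.pair_subset (hleaf hx) (hleaf hy)
  have hD : IsDomSet G (insert s (I \ {x, y})) := by
    intro z hz
    by_cases hzl : z = x ∨ z = y
    · refine ⟨s, Set.mem_insert _ _, ?_⟩
      rcases hzl with rfl | rfl
      exacts [adj_of_neighborSet_eq hx, adj_of_neighborSet_eq hy]
    · obtain ⟨u, huI, huz⟩ :=
        isDomSet_of_isIndepSet_of_ncard_eq_indepNum hI hmax z fun hzI => hz (Or.inr ⟨hzI, hzl⟩)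
      refine ⟨u, Or.inr ⟨huI, ?_⟩, huz⟩
      rintro (rfl | rfl)
      · exact hz (eq_of_adj_of_neighborSet_eq hx huz ▸ Set.mem_insert _ _)
      · exact hz (eq_of_adj_of_neighborSet_eq hy huz ▸ Set.mem_insert _ _)
  have hcard : (insert s (I \ {x, y})).ncard + 1 = I.ncard := by
    have := Set.ncard_sdiff_add_ncard_of_subset hxyI
    rw [Set.ncard_pair hxy] at this
    rw [Set.ncard_insert_of_notMem fun h => hs h.1]
    omega
  have := domNum_le_ncard G hD
  omega

end Leaves

/-- `W` is the vertex set of `H` in a decomposition of `G` as a corona `H ∘ K₁` plus isolated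
vertices: each vertex outside `W` is isolated or a leaf hanging from `W`, and each vertex of `W`
carries exactly one such leaf. -/
def IsCoronaSet (G : SimpleGraph V) (W : Set V) : Prop :=
  (∀ x ∉ W, (G.neighborSet x).Subsingleton ∧ G.neighborSet x ⊆ W) ∧
    ∀ w ∈ W, ∃! l, l ∉ W ∧ G.Adj w l

namespace IsCoronaSet

variable {G : SimpleGraph V} {W : Set V}

theorem eq_of_adj_of_adj (hW : IsCoronaSet G W) {w x y : V} (hw : w ∈ W) (hx : x ∉ W)
    (hy : y ∉ W) (hwx : G.Adj w x) (hwy : G.Adj w y) : x = y :=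
  (hW.2 w hw).unique ⟨hx, hwx⟩ ⟨hy, hwy⟩

theorem notMem_of_neighborSet_eq_empty (hW : IsCoronaSet G W) {x : V}
    (hx : G.neighborSet x = ∅) : x ∉ W := fun hxW => by
  obtain ⟨l, ⟨-, hxl⟩, -⟩ := hW.2 x hxW
  exact (hx ▸ hxl : l ∈ (∅ : Set V))

theorem isIndepSet_compl (hW : IsCoronaSet G W) : G.IsIndepSet Wᶜ :=
  fun _ ha _ hb _ hab => hb ((hW.1 _ ha).2 hab)

/-- The map sending each vertex of `W` to its leaf and fixing the rest is injective on `S`. -/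
theorem ncard_le_ncard_compl [Finite V] (hW : IsCoronaSet G W) {S : Set V}
    (hS : ∀ a ∈ S, ∀ b ∈ S, a ∉ W → ¬ G.Adj a b) : S.ncard ≤ Wᶜ.ncard := by
  have : ∀ x, ∃ y ∉ W, y = x ∨ G.Adj x y := fun x => by
    by_cases hx : x ∈ W
    · obtain ⟨l, ⟨hl, hxl⟩, -⟩ := hW.2 x hx
      exact ⟨l, hl, Or.inr hxl⟩
    · exact ⟨x, hx, Or.inl rfl⟩
  choose r hrW hr using this
  refine Set.ncard_le_ncard_of_injOn r (fun x _ => hrW x) fun a ha b hb hab => ?_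
  rcases hr a with ha' | ha' <;> rcases hr b with hb' | hb'
  · rw [← ha', ← hb', hab]
  · have haW : a ∉ W := ha' ▸ hrW a
    rw [← hab, ha'] at hb'
    exact absurd hb'.symm (hS a ha b hb haW)
  · have hbW : b ∉ W := hb' ▸ hrW b
    rw [hab, hb'] at ha'
    exact absurd ha'.symm (hS b hb a ha hbW)
  · exact (hW.1 _ (hrW b)).1 (hab ▸ ha'.symm) hb'.symm

theorem ncard_compl_le [Finite V] (hW : IsCoronaSet G W) {D : Set V} (hD : IsDomSet G D) :
    Wᶜ.ncard ≤ D.ncard := by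
  have : ∀ x, ∃ y ∈ D, y = x ∨ G.Adj y x := fun x => by
    by_cases hx : x ∈ D
    · exact ⟨x, hx, Or.inl rfl⟩
    · obtain ⟨y, hy, hyx⟩ := hD x hx
      exact ⟨y, hy, Or.inr hyx⟩
  choose d hdD hd using this
  refine Set.ncard_le_ncard_of_injOn d (fun x _ => hdD x) fun a ha b hb hab => ?_
  rcases hd a with ha' | ha' <;> rcases hd b with hb' | hb'
  · rw [← ha', ← hb', hab]
  · exact absurd ((hW.1 b hb).2 hb'.symm) (by rw [← hab, ha']; exact ha)
  · exact absurd ((hW.1 a ha).2 ha'.symm) (by rw [hab, hb']; exact hb)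
  · exact hW.eq_of_adj_of_adj ((hW.1 b hb).2 hb'.symm) ha hb (hab ▸ ha') hb'

theorem indepNum_le [Finite V] (hW : IsCoronaSet G W) : _root_.indepNum G ≤ Wᶜ.ncard := by
  obtain ⟨I, hI, hmax⟩ := exists_isIndepSet_ncard_eq_indepNum G
  exact hmax ▸ hW.ncard_le_ncard_compl fun a ha b hb _ hab => hI ha hb hab.ne hab

theorem domNum_eq_indepNum [Finite V] (hW : IsCoronaSet G W) :
    domNum G = _root_.indepNum G := by
  obtain ⟨D, hD, hcard⟩ := exists_isDomSet_ncard_eq_domNum G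
  have := hW.ncard_compl_le hD
  have := hW.indepNum_le
  have := domNum_le_indepNum G
  omega

theorem ncard_union_le [Finite V] (hW : IsCoronaSet G W) :
    (W ∪ {x | G.neighborSet x = ∅}).ncard ≤ Wᶜ.ncard :=
  hW.ncard_le_ncard_compl fun _ ha b _ haW hab =>
    Set.eq_empty_iff_forall_notMem.1 (ha.resolve_left haW) b hab

theorem swap (hW : IsCoronaSet G W) {w u : V} (hwW : w ∈ W) (hw : G.neighborSet w = {u}) :
    IsCoronaSet G (insert u (W \ {w})) := by
  have hwu : G.Adj w u := (adj_of_neighborSet_eq hw).symm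
  have huW : u ∉ W := by
    obtain ⟨l, ⟨hl, hwl⟩, -⟩ := hW.2 w hwW
    exact eq_of_adj_of_neighborSet_eq hw hwl ▸ hl
  have hu : ∀ {y}, G.Adj u y → y = w := fun h => (hW.1 u huW).1 h hwu.symm
  refine ⟨fun x hx => ?_, fun y hy => ?_⟩
  · simp only [Set.mem_insert_iff, Set.mem_sdiff, Set.mem_singleton_iff, not_or, not_and,
      not_not] at hx
    by_cases hxw : x = w
    · subst hxw
      rw [hw]
      exact ⟨Set.subsingleton_singleton, by simp⟩
    · have hxW : x ∉ W := fun h => hxw (hx.2 h)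
      refine ⟨(hW.1 x hxW).1, fun y hy => Or.inr ⟨(hW.1 x hxW).2 hy, ?_⟩⟩
      rintro rfl
      exact hx.1 (eq_of_adj_of_neighborSet_eq hw hy.symm)
  · rcases hy with rfl | ⟨hyW, hyw⟩
    · refine ⟨w, ⟨?_, hwu.symm⟩, fun l hl => hu hl.2⟩
      simp [hwu.ne]
    · obtain ⟨l, ⟨hl, hyl⟩, hluniq⟩ := hW.2 y hyW
      have hlu : l ≠ u := fun h => hyw (hu (h ▸ hyl.symm))
      refine ⟨l, ⟨by simp [hlu, hl], hyl⟩,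
        fun l' hl' => hluniq l' ⟨fun hl'W => ?_, hl'.2⟩⟩
      have hl'w : l' = w := by
        by_contra h
        exact hl'.1 (Or.inr ⟨hl'W, h⟩)
      exact huW (eq_of_adj_of_neighborSet_eq hw (hl'w ▸ hl'.2).symm ▸ hyW)

end IsCoronaSet

section DeleteIncidenceSet

variable {G : SimpleGraph V} {s v : V}

theorem neighborSet_deleteIncidenceSet_self : (G.deleteIncidenceSet s).neighborSet s = ∅ := by
  ext
  simp [deleteIncidenceSet_adj]

theorem neighborSet_deleteIncidenceSet_eq_empty (hv : G.neighborSet v = {s}) :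
    (G.deleteIncidenceSet s).neighborSet v = ∅ := by
  ext y
  simp only [mem_neighborSet, deleteIncidenceSet_adj, Set.mem_empty_iff_false, iff_false]
  exact fun h => h.2.2 (eq_of_adj_of_neighborSet_eq hv h.1)

theorem neighborSet_eq_of_neighborSet_deleteIncidenceSet_eq_empty {u : V} (hsu : G.Adj s u)
    (hu : (G.deleteIncidenceSet s).neighborSet u = ∅) : G.neighborSet u = {s} := by
  refine Set.eq_singleton_iff_unique_mem.2 ⟨hsu.symm, fun y huy => ?_⟩
  by_contra hys
  exact Set.eq_empty_iff_forall_notMem.1 hu y (deleteIncidenceSet_adj.2 ⟨huy, hsu.ne', hys⟩)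

theorem domNum_lt_domNum_deleteIncidenceSet [Finite V] (hv : G.neighborSet v = {s}) :
    domNum G < domNum (G.deleteIncidenceSet s) := by
  obtain ⟨D, hD, hcard⟩ := exists_isDomSet_ncard_eq_domNum (G.deleteIncidenceSet s)
  have hvD := hD.mem_of_neighborSet_eq_empty (neighborSet_deleteIncidenceSet_eq_empty hv)
  have hsD := hD.mem_of_neighborSet_eq_empty neighborSet_deleteIncidenceSet_self
  have hsv := adj_of_neighborSet_eq hv
  have hD' : IsDomSet G (D \ {v}) := by
    intro z hz
    by_cases hzv : z = v
    · exact ⟨s, ⟨hsD, hsv.ne⟩, hzv ▸ hsv⟩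
    · obtain ⟨y, hyD, hyz⟩ := hD z fun hzD => hz ⟨hzD, hzv⟩
      rw [deleteIncidenceSet_adj] at hyz
      refine ⟨y, ⟨hyD, ?_⟩, hyz.1⟩
      rintro rfl
      exact hyz.2.2 (eq_of_adj_of_neighborSet_eq hv hyz.1)
  calc domNum G ≤ (D \ {v}).ncard := domNum_le_ncard G hD'
    _ < D.ncard := Set.ncard_sdiff_singleton_lt_of_mem hvD
    _ = _ := hcard

theorem indepNum_deleteIncidenceSet_le [Finite V] (G : SimpleGraph V) (s : V) :
    _root_.indepNum (G.deleteIncidenceSet s) ≤ _root_.indepNum G + 1 := by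
  obtain ⟨I, hI, hmax⟩ := exists_isIndepSet_ncard_eq_indepNum (G.deleteIncidenceSet s)
  have hI' : G.IsIndepSet (I \ {s}) := fun a ha b hb hab h =>
    hI ha.1 hb.1 hab (deleteIncidenceSet_adj.2 ⟨h, ha.2, hb.2⟩)
  have := ncard_le_indepNum G hI'
  have := Set.ncard_le_ncard_sdiff_add_ncard I {s}
  rw [Set.ncard_singleton] at this
  omega

theorem domNum_deleteIncidenceSet_eq_indepNum [Finite V] (h : domNum G = _root_.indepNum G)
    (hv : G.neighborSet v = {s}) :
    domNum (G.deleteIncidenceSet s) = _root_.indepNum (G.deleteIncidenceSet s) := by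
  have := domNum_lt_domNum_deleteIncidenceSet hv
  have := indepNum_deleteIncidenceSet_le G s
  have := domNum_le_indepNum (G.deleteIncidenceSet s)
  omega

theorem IsCoronaSet.insert_of_deleteIncidenceSet {W : Set V}
    (hW : IsCoronaSet (G.deleteIncidenceSet s) W) (hv : G.neighborSet v = {s})
    (hN : ∀ u, G.Adj s u → u ≠ v → u ∈ W) : IsCoronaSet G (insert s W) := by
  have hsW := hW.notMem_of_neighborSet_eq_empty neighborSet_deleteIncidenceSet_self
  have hvW := hW.notMem_of_neighborSet_eq_empty (neighborSet_deleteIncidenceSet_eq_empty hv)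
  have hsv := adj_of_neighborSet_eq hv
  refine ⟨fun x hx => ?_, fun y hy => ?_⟩
  · rw [Set.mem_insert_iff, not_or] at hx
    by_cases hxv : x = v
    · subst hxv
      rw [hv]
      exact ⟨Set.subsingleton_singleton, by simp⟩
    · have hnx : G.neighborSet x = (G.deleteIncidenceSet s).neighborSet x := by
        ext y
        simp only [mem_neighborSet, deleteIncidenceSet_adj, hx.1, ne_eq, not_false_eq_true,
          true_and, iff_self_and]
        rintro hxy rfl
        exact hx.2 (hN x hxy.symm hxv)
      rw [hnx]
      exact ⟨(hW.1 x hx.2).1, (hW.1 x hx.2).2.trans (Set.subset_insert _ _)⟩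
  · rcases hy with rfl | hy
    · refine ⟨v, ⟨?_, hsv⟩, fun l hl => ?_⟩
      · simp [hsv.ne', hvW]
      · by_contra hlv
        exact hl.1 (Set.mem_insert_of_mem _ (hN l hl.2 hlv))
    · obtain ⟨l, ⟨hl, hyl⟩, hluniq⟩ := hW.2 y hy
      rw [deleteIncidenceSet_adj] at hyl
      refine ⟨l, ⟨by simp [hyl.2.2, hl], hyl.1⟩, fun l' hl' => hluniq l' ⟨?_, ?_⟩⟩
      · exact fun h => hl'.1 (Set.mem_insert_of_mem _ h)
      · exact deleteIncidenceSet_adj.2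
          ⟨hl'.2, hyl.2.1, fun h => hl'.1 (h ▸ Set.mem_insert _ _)⟩

/-- `s` dominates `v` and `u`, and `x` dominates `w`. -/
theorem isDomSet_sdiff_of_isCoronaSet_deleteIncidenceSet {W : Set V} {u w x : V}
    (hW : IsCoronaSet (G.deleteIncidenceSet s) W) (hv : G.neighborSet v = {s})
    (hwW : w ∈ W) (huW : u ∉ W) (hwu : (G.deleteIncidenceSet s).Adj w u) (hsu : G.Adj s u)
    (hwx : G.Adj w x) (hxu : x ≠ u) :
    IsDomSet G ((W ∪ {z | (G.deleteIncidenceSet s).neighborSet z = ∅}) \ {w, v}) := by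
  have hsW := hW.notMem_of_neighborSet_eq_empty neighborSet_deleteIncidenceSet_self
  have hvW := hW.notMem_of_neighborSet_eq_empty (neighborSet_deleteIncidenceSet_eq_empty hv)
  have hsv := adj_of_neighborSet_eq hv
  set D := (W ∪ {z | (G.deleteIncidenceSet s).neighborSet z = ∅}) \ {w, v}
  have hsD : s ∈ D := ⟨Or.inr neighborSet_deleteIncidenceSet_self,
    by rintro (h | h); exacts [hsW (h ▸ hwW), hsv.ne h]⟩
  have hWD : ∀ y ∈ W, y ≠ w → y ∈ D := fun y hy hyw =>
    ⟨Or.inl hy, by rintro (h | h); exacts [hyw h, hvW (h ▸ hy)]⟩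
  intro z hz
  by_cases hzv : z = v
  · exact ⟨s, hsD, hzv ▸ hsv⟩
  by_cases hzw : z = w
  · subst z
    by_cases hxs : x = s
    · exact ⟨s, hsD, hxs ▸ hwx.symm⟩
    have hwx' : (G.deleteIncidenceSet s).Adj w x :=
      deleteIncidenceSet_adj.2 ⟨hwx, fun h => hsW (h ▸ hwW), hxs⟩
    have hxW : x ∈ W := by_contra fun h => hxu (hW.eq_of_adj_of_adj hwW h huW hwx' hwu)
    exact ⟨x, hWD x hxW hwx.ne', hwx.symm⟩
  have hzWZ : z ∉ W ∪ {z | (G.deleteIncidenceSet s).neighborSet z = ∅} := fun h =>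
    hz ⟨h, by rintro (h | h); exacts [hzw h, hzv h]⟩
  rw [Set.mem_union, not_or] at hzWZ
  obtain ⟨y, hzy⟩ := Set.nonempty_iff_ne_empty.2 hzWZ.2
  have hyW := (hW.1 z hzWZ.1).2 hzy
  by_cases hyw : y = w
  · subst y
    obtain rfl := hW.eq_of_adj_of_adj hyW hzWZ.1 huW hzy.symm hwu
    exact ⟨s, hsD, hsu⟩
  · exact ⟨y, hWD y hyW hyw, (deleteIncidenceSet_adj.1 hzy).1.symm⟩

theorem domNum_lt_indepNum_of_isCoronaSet_deleteIncidenceSet [Finite V] {W : Set V} {u w x : V}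
    (hW : IsCoronaSet (G.deleteIncidenceSet s) W) (hv : G.neighborSet v = {s})
    (hwW : w ∈ W) (huW : u ∉ W) (hwu : (G.deleteIncidenceSet s).Adj w u) (hsu : G.Adj s u)
    (hwx : G.Adj w x) (hxu : x ≠ u) : domNum G < _root_.indepNum G := by
  set G' := G.deleteIncidenceSet s
  set Z := {z | G'.neighborSet z = ∅}
  have hvW := hW.notMem_of_neighborSet_eq_empty (neighborSet_deleteIncidenceSet_eq_empty hv)
  have hcard : ((W ∪ Z) \ {w, v}).ncard + 2 = (W ∪ Z).ncard := by
    have := Set.ncard_sdiff_add_ncard_of_subset (Set.pair_subset (Set.mem_union_left Z hwW)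
      (Set.mem_union_right W (neighborSet_deleteIncidenceSet_eq_empty hv)))
    rwa [Set.ncard_pair fun h : w = v => hvW (h ▸ hwW)] at this
  have h1 : (W ∪ Z).ncard ≤ Wᶜ.ncard := hW.ncard_union_le
  have h2 : Wᶜ.ncard ≤ _root_.indepNum G' := ncard_le_indepNum G' hW.isIndepSet_compl
  have h3 : _root_.indepNum G' ≤ _root_.indepNum G + 1 := indepNum_deleteIncidenceSet_le G s
  have h4 : domNum G ≤ ((W ∪ Z) \ {w, v}).ncard := domNum_le_ncard G
    (isDomSet_sdiff_of_isCoronaSet_deleteIncidenceSet hW hv hwW huW hwu hsu hwx hxu)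
  omega

theorem exists_isCoronaSet_of_deleteIncidenceSet [Finite V] (h : domNum G = _root_.indepNum G)
    (hv : G.neighborSet v = {s}) (hG' : ∃ W, IsCoronaSet (G.deleteIncidenceSet s) W) :
    ∃ W, IsCoronaSet G W := by
  set G' := G.deleteIncidenceSet s
  obtain ⟨W, hW, hmax⟩ := Set.exists_max_image {W | IsCoronaSet G' W}
    (fun W => (W ∩ G.neighborSet s).ncard) (Set.toFinite _) hG'
  refine ⟨insert s W, hW.insert_of_deleteIncidenceSet hv fun u hsu huv => ?_⟩
  by_contra huW
  obtain ⟨w, huw⟩ : (G'.neighborSet u).Nonempty := Set.nonempty_iff_ne_empty.2 fun hu =>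
    huv (eq_of_neighborSet_eq_of_domNum_eq_indepNum h
      (neighborSet_eq_of_neighborSet_deleteIncidenceSet_eq_empty hsu hu) hv)
  have hwW := (hW.1 u huW).2 huw
  by_cases hw : G.neighborSet w = {u}
  · have hw' : G'.neighborSet w = {u} := Set.eq_singleton_iff_unique_mem.2
      ⟨(show G'.Adj u w from huw).symm,
        fun y hy => eq_of_adj_of_neighborSet_eq hw (deleteIncidenceSet_adj.1 hy).1⟩
    have hsw : ¬ G.Adj s w := fun hsw => hsu.ne (eq_of_adj_of_neighborSet_eq hw hsw.symm)
    have hsub : W ∩ G.neighborSet s ⊆ insert u (W \ {w}) ∩ G.neighborSet s := fun y hy =>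
      ⟨Or.inr ⟨hy.1, fun hyw => hsw ((show y = w from hyw) ▸ hy.2)⟩, hy.2⟩
    have hlt := (Set.ssubset_iff_of_subset hsub).2
      ⟨u, ⟨Set.mem_insert _ _, hsu⟩, fun hu => huW hu.1⟩
    exact (hmax _ (hW.swap hwW hw')).not_gt (Set.ncard_lt_ncard hlt)
  · obtain ⟨x, hwx, hxu⟩ : ∃ x, G.Adj w x ∧ x ≠ u := by
      by_contra! hx
      exact hw (Set.eq_singleton_iff_unique_mem.2 ⟨(deleteIncidenceSet_adj.1 huw).1.symm, hx⟩)
    exact (domNum_lt_indepNum_of_isCoronaSet_deleteIncidenceSet hW hv hwW huW huw.symm hsu hwx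
      hxu).ne h

end DeleteIncidenceSet

theorem SimpleGraph.IsAcyclic.exists_isCoronaSet_of_domNum_eq_indepNum [Finite V]
    {G : SimpleGraph V} (hG : G.IsAcyclic) (h : domNum G = _root_.indepNum G) :
    ∃ W, IsCoronaSet G W := by
  induction G using WellFoundedLT.induction with
  | _ G ih =>
  rcases eq_or_ne G ⊥ with rfl | hne
  · exact ⟨∅, fun x _ => by simp, by simp⟩
  obtain ⟨v, s, hv⟩ := hG.exists_neighborSet_eq_singleton hne
  have hlt : G.deleteIncidenceSet s < G := (G.deleteIncidenceSet_le s).lt_of_ne fun heq => by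
    have := adj_of_neighborSet_eq hv
    rw [← heq, deleteIncidenceSet_adj] at this
    exact this.2.1 rfl
  exact exists_isCoronaSet_of_deleteIncidenceSet h hv
    (ih _ hlt (hG.anti hlt.le) (domNum_deleteIncidenceSet_eq_indepNum h hv))

theorem IsCorona.exists_isCoronaSet {G : SimpleGraph V} (hG : IsCorona G) :
    ∃ W, IsCoronaSet G W := by
  obtain ⟨W, hleaf, hW, -⟩ := hG
  refine ⟨W, fun x hx => ?_, hW⟩
  obtain ⟨hx, w, hwW, hwx⟩ := hleaf x hx
  rw [hx.neighborSet_eq_s10 hwx]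
  exact ⟨Set.subsingleton_singleton, Set.singleton_subset_iff.2 hwW⟩

theorem IsCoronaSet.isCorona [Nontrivial V] {G : SimpleGraph V} {W : Set V}
    (hW : IsCoronaSet G W) (hG : G.Connected) : IsCorona G := by
  have hleaf : ∀ x ∉ W, ∃ w, G.neighborSet x = {w} ∧ w ∈ W := fun x hx => by
    obtain ⟨w, hxw⟩ := hG.preconnected.exists_adj_of_nontrivial x
    exact ⟨w, (hW.1 x hx).1.eq_singleton_of_mem hxw, (hW.1 x hx).2 hxw⟩
  have hne : Nonempty W := by
    obtain ⟨x⟩ := hG.nonempty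
    by_cases hx : x ∈ W
    · exact ⟨⟨x, hx⟩⟩
    · obtain ⟨w, -, hwW⟩ := hleaf x hx
      exact ⟨⟨w, hwW⟩⟩
  refine ⟨W, fun x hx => ?_, hW.2, (connected_iff _).2
    ⟨hG.preconnected.induce_of_degree_eq_one fun x hx => (hW.1 x hx).1, hne⟩⟩
  obtain ⟨w, hxw, hwW⟩ := hleaf x hx
  exact ⟨by rw [IsLeaf, hxw, Set.ncard_singleton], w, hwW, adj_of_neighborSet_eq hxw⟩

theorem stmt_10 {V : Type*} [Fintype V] (T : SimpleGraph V) (hT : T.IsTree)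
    (hnt : 2 ≤ Fintype.card V) :
    domNum T = _root_.indepNum T ↔ IsCorona T := by
  have : Nontrivial V := Fintype.one_lt_card_iff_nontrivial.1 hnt
  constructor
  · intro h
    obtain ⟨W, hW⟩ := hT.isAcyclic.exists_isCoronaSet_of_domNum_eq_indepNum h
    exact hW.isCorona hT.connected
  · intro h
    obtain ⟨W, hW⟩ := h.exists_isCoronaSet
    exact hW.domNum_eq_indepNum
end
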